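/- arXiv:2405.12748 — 10 statements merged into one kernel-verified Lean document; each statement's English description precedes it below -/
import Mathlib

section
/- Let ρ be a constant skew-symmetric n×n real matrix and P₁ a constant symmetric n×n real matrix. Let G be the bilinear-form field on ℝ×ℝ×ℝⁿ given classically by 2 du dv + xᵀe^{uρ}P₁e^{−uρ}x du² − dxᵀdx, and let G' be the Alekseevsky-form field 2 du dv + Xᵀ(P₁+ρ²)X du² + 2XᵀρdX du − dXᵀdX, i.e. G'(u,v,X)((a₁,b₁,ξ₁),(a₂,b₂,ξ₂)) = a₁b₂ + a₂b₁ + (Xᵀ(P₁+ρ²)X)a₁a₂ + a₁Xᵀρξ₂ + a₂Xᵀρξ₁ − ξ₁ᵀξ₂. Then the diffeomorphism Φ(u,v,X) = (u, v, e^{uρ}X) of ℝ×ℝ×ℝⁿ satisfies Φ*G = G'; in particular Φ is an isometry from (ℝ×ℝ×ℝⁿ, G') to (ℝ×ℝ×ℝⁿ, G) which commutes with the dilation 𝒟(u,v,x) = (0,2v,x) and fixes the curve {(u,0,0)} pointwise. -/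
/-! Write `x = e^{uρ} X`. Since `ρ` is skew, `e^{uρ}` is orthogonal: it cancels from `dxᵀdx` and
conjugates the tidal matrix `e^{uρ} P₁ e^{-uρ}` back to `P₁`. The only new contribution comes from
differentiating `e^{uρ}` in `u`, `dx = e^{uρ} (ρX du + dX)`, and skew-symmetry turns
`-|ρX du + dX|²` into `Xᵀρ²X du² + 2 XᵀρdX du - dXᵀdX`. -/

open Matrix

attribute [local instance] Matrix.normedAddCommGroup Matrix.normedSpace

noncomputable section

/-- The manifold `ℝ × ℝ × ℝⁿ`, with points `(u, v, x)`. -/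
abbrev Mfd (n : ℕ) := ℝ × ℝ × (Fin n → ℝ)

/-- The Brinkmann metric `2 du dv + xᵀ p(u) x du² − dxᵀ dx`, as a field of bilinear forms. -/
def Gb (n : ℕ) (p : ℝ → Matrix (Fin n) (Fin n) ℝ) :
    Mfd n → Mfd n → Mfd n → ℝ := fun m X₁ X₂ =>
  X₁.1 * X₂.2.1 + X₂.1 * X₁.2.1 + (m.2.2 ⬝ᵥ (p m.1 *ᵥ m.2.2)) * X₁.1 * X₂.1
    - X₁.2.2 ⬝ᵥ X₂.2.2

/-- Pullback of a field of bilinear forms under a smooth map. -/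
def pull (n : ℕ) (φ : Mfd n → Mfd n) (G : Mfd n → Mfd n → Mfd n → ℝ) :
    Mfd n → Mfd n → Mfd n → ℝ := fun m X Y =>
  G (φ m) (fderiv ℝ φ m X) (fderiv ℝ φ m Y)

/-- The dilation vector field `𝒟(u,v,x) = (0, 2v, x)`. -/
def dil (n : ℕ) : Mfd n → Mfd n := fun m => (0, 2 * m.2.1, m.2.2)


open NormedSpace (exp)

section SkewExp

variable {ι : Type*} [Fintype ι]

theorem mulVec_dotProduct_of_skew {A : Matrix ι ι ℝ} (hA : Aᵀ = -A) (v w : ι → ℝ) :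
    (A *ᵥ v) ⬝ᵥ w = -(v ⬝ᵥ (A *ᵥ w)) := by
  rw [dotProduct_comm, ← dotProduct_transpose_mulVec, hA, neg_mulVec, dotProduct_neg]

variable [DecidableEq ι]

theorem exp_mul_exp_neg (A : Matrix ι ι ℝ) : exp A * exp (-A) = 1 := by
  rw [← Matrix.exp_add_of_commute _ _ (Commute.neg_right (Commute.refl A)), add_neg_cancel,
    NormedSpace.exp_zero]

theorem exp_neg_mul_exp (A : Matrix ι ι ℝ) : exp (-A) * exp A = 1 := by
  simpa using exp_mul_exp_neg (-A)

theorem transpose_exp_of_skew {A : Matrix ι ι ℝ} (hA : Aᵀ = -A) : (exp A)ᵀ = exp (-A) := by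
  rw [← Matrix.exp_transpose, hA]

theorem exp_mulVec_dotProduct_exp_mulVec_of_skew {A : Matrix ι ι ℝ} (hA : Aᵀ = -A)
    (v w : ι → ℝ) : (exp A *ᵥ v) ⬝ᵥ (exp A *ᵥ w) = v ⬝ᵥ w := by
  rw [dotProduct_comm, ← dotProduct_transpose_mulVec, transpose_exp_of_skew hA, mulVec_mulVec,
    exp_neg_mul_exp, one_mulVec]

theorem HasFDerivAt.exp_smul_mulVec {E : Type*} [NormedAddCommGroup E] [NormedSpace ℝ E]
    {f : E → ℝ} {g : E → ι → ℝ} {f' : E →L[ℝ] ℝ} {g' : E →L[ℝ] ι → ℝ} {x : E}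
    (hf : HasFDerivAt f f' x) (hg : HasFDerivAt g g' x) (A : Matrix ι ι ℝ) :
    HasFDerivAt (fun y => NormedSpace.exp (f y • A) *ᵥ g y)
      (f'.smulRight (NormedSpace.exp (f x • A) *ᵥ (A *ᵥ g x)) +
        (LinearMap.toContinuousLinearMap (NormedSpace.exp (f x • A)).mulVecLin).comp g') x := by
  -- Differentiating `exp` needs a Banach-algebra norm on matrices. The operator norm has the
  -- same topology as the sup norm in force here, but the two match only after unfolding
  -- instances, hence `change` rather than `simp` below.
  open scoped Norms.Operator in
  have hexp := (hasDerivAt_exp_smul_const A (f x)).hasFDerivAt.comp x hf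
  let T : Matrix ι ι ℝ →L[ℝ] (ι → ℝ) →L[ℝ] (ι → ℝ) :=
    LinearMap.toContinuousLinearMap
      (LinearMap.toContinuousLinearMap.toLinearMap ∘ₗ mulVecBilin ℝ ℝ)
  refine ((T.hasFDerivAt.comp x hexp).clm_apply hg).congr_fderiv ?_
  ext y : 1
  change NormedSpace.exp (f x • A) *ᵥ g' y + (f' y • (NormedSpace.exp (f x • A) * A)) *ᵥ g x =
    f' y • (NormedSpace.exp (f x • A) *ᵥ (A *ᵥ g x)) + NormedSpace.exp (f x • A) *ᵥ g' y
  rw [smul_mulVec, mulVec_mulVec, add_comm]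

end SkewExp

variable {n : ℕ}

def rotatingFrame (ρ : Matrix (Fin n) (Fin n) ℝ) (m : Mfd n) : Mfd n :=
  (m.1, m.2.1, exp (m.1 • ρ) *ᵥ m.2.2)

def alekseevskyMetric (n : ℕ) (ρ P : Matrix (Fin n) (Fin n) ℝ) (m X Y : Mfd n) : ℝ :=
  X.1 * Y.2.1 + Y.1 * X.2.1 + (m.2.2 ⬝ᵥ ((P + ρ * ρ) *ᵥ m.2.2)) * X.1 * Y.1
    + X.1 * (m.2.2 ⬝ᵥ (ρ *ᵥ Y.2.2)) + Y.1 * (m.2.2 ⬝ᵥ (ρ *ᵥ X.2.2)) - X.2.2 ⬝ᵥ Y.2.2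

theorem fderiv_rotatingFrame_apply (ρ : Matrix (Fin n) (Fin n) ℝ) (m Y : Mfd n) :
    fderiv ℝ (rotatingFrame ρ) m Y =
      (Y.1, Y.2.1, exp (m.1 • ρ) *ᵥ (Y.1 • (ρ *ᵥ m.2.2) + Y.2.2)) := by
  have hid := hasFDerivAt_id (𝕜 := ℝ) m
  have h := hid.fst.prodMk (hid.snd.fst.prodMk
    (HasFDerivAt.exp_smul_mulVec hid.fst hid.snd.snd ρ))
  rw [show fderiv ℝ (rotatingFrame ρ) m = _ from h.fderiv]
  simp [mulVec_add, mulVec_smul]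

theorem pull_rotatingFrame_Gb {ρ : Matrix (Fin n) (Fin n) ℝ} (hρ : ρᵀ = -ρ)
    (P : Matrix (Fin n) (Fin n) ℝ) (m X Y : Mfd n) :
    pull n (rotatingFrame ρ) (Gb n fun u => exp (u • ρ) * P * exp (-(u • ρ))) m X Y =
      alekseevskyMetric n ρ P m X Y := by
  obtain ⟨u, v, x⟩ := m
  have hskew : (u • ρ)ᵀ = -(u • ρ) := by rw [transpose_smul, hρ, smul_neg]
  have horth := exp_mulVec_dotProduct_exp_mulVec_of_skew hskew
  have htidal : (exp (u • ρ) * P * exp (-(u • ρ))) *ᵥ (exp (u • ρ) *ᵥ x) =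
      exp (u • ρ) *ᵥ (P *ᵥ x) := by
    rw [mulVec_mulVec, mul_assoc _ (exp (-(u • ρ))), exp_neg_mul_exp, mul_one, mulVec_mulVec]
  have hρdot := mulVec_dotProduct_of_skew hρ
  simp only [pull, Gb, fderiv_rotatingFrame_apply, rotatingFrame, htidal, horth]
  simp only [alekseevskyMetric, add_dotProduct, dotProduct_add, smul_dotProduct, dotProduct_smul,
    smul_eq_mul, dotProduct_comm X.2.2 (ρ *ᵥ x), hρdot, add_mulVec, ← mulVec_mulVec]
  ring

theorem leftInverse_rotatingFrame_neg (ρ : Matrix (Fin n) (Fin n) ℝ) :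
    Function.LeftInverse (rotatingFrame (-ρ)) (rotatingFrame ρ) := fun m => by
  simp [rotatingFrame, mulVec_mulVec, exp_neg_mul_exp]

theorem rotatingFrame_bijective (ρ : Matrix (Fin n) (Fin n) ℝ) :
    Function.Bijective (rotatingFrame ρ) :=
  ⟨(leftInverse_rotatingFrame_neg ρ).injective,
    by simpa using (leftInverse_rotatingFrame_neg (-ρ)).surjective⟩

theorem fderiv_rotatingFrame_dil (ρ : Matrix (Fin n) (Fin n) ℝ) (m : Mfd n) :
    fderiv ℝ (rotatingFrame ρ) m (dil n m) = dil n (rotatingFrame ρ m) := by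
  simp [fderiv_rotatingFrame_apply, dil, rotatingFrame]

theorem stmt0_general (n : ℕ)
    (ρ P₁ : Matrix (Fin n) (Fin n) ℝ) (hρ : ρᵀ = -ρ)
    (G : Mfd n → Mfd n → Mfd n → ℝ)
    (hG : G = Gb n (fun u =>
      NormedSpace.exp (u • ρ) * P₁ * NormedSpace.exp (-(u • ρ))))
    (G' : Mfd n → Mfd n → Mfd n → ℝ)
    (hG' : G' = fun m X₁ X₂ =>
      X₁.1 * X₂.2.1 + X₂.1 * X₁.2.1
        + (m.2.2 ⬝ᵥ ((P₁ + ρ * ρ) *ᵥ m.2.2)) * X₁.1 * X₂.1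
        + X₁.1 * (m.2.2 ⬝ᵥ (ρ *ᵥ X₂.2.2)) + X₂.1 * (m.2.2 ⬝ᵥ (ρ *ᵥ X₁.2.2))
        - X₁.2.2 ⬝ᵥ X₂.2.2)
    (Φ : Mfd n → Mfd n)
    (hΦ : Φ = fun m => (m.1, m.2.1, NormedSpace.exp (m.1 • ρ) *ᵥ m.2.2)) :
    (∀ m X Y, pull n Φ G m X Y = G' m X Y) ∧
    Function.Bijective Φ ∧
    (∀ m : Mfd n, fderiv ℝ Φ m (dil n m) = dil n (Φ m)) ∧
    (∀ u : ℝ, Φ (u, 0, 0) = (u, 0, 0)) := by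
  subst hG hG' hΦ
  exact ⟨pull_rotatingFrame_Gb hρ P₁, rotatingFrame_bijective ρ, fderiv_rotatingFrame_dil ρ,
    fun u => by simp⟩

/-- the change of variables `Φ(u,v,X) = (u, v, e^{uρ}X)` pulls back the
Brinkmann metric with tidal matrix `e^{uρ} P₁ e^{−uρ}` to the Alekseevsky-form metric
`2 du dv + Xᵀ(P₁+ρ²)X du² + 2XᵀρdX du − dXᵀdX`; it is a bijection commuting with the
dilation and fixing the curve `{(u,0,0)}` pointwise. -/
theorem stmt0 (n : ℕ) (hn : 1 ≤ n)
    (ρ P₁ : Matrix (Fin n) (Fin n) ℝ) (hρ : ρᵀ = -ρ) (hP₁ : P₁ᵀ = P₁)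
    (G : Mfd n → Mfd n → Mfd n → ℝ)
    (hG : G = Gb n (fun u =>
      NormedSpace.exp (u • ρ) * P₁ * NormedSpace.exp (-(u • ρ))))
    (G' : Mfd n → Mfd n → Mfd n → ℝ)
    (hG' : G' = fun m X₁ X₂ =>
      X₁.1 * X₂.2.1 + X₂.1 * X₁.2.1
        + (m.2.2 ⬝ᵥ ((P₁ + ρ * ρ) *ᵥ m.2.2)) * X₁.1 * X₂.1
        + X₁.1 * (m.2.2 ⬝ᵥ (ρ *ᵥ X₂.2.2)) + X₂.1 * (m.2.2 ⬝ᵥ (ρ *ᵥ X₁.2.2))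
        - X₁.2.2 ⬝ᵥ X₂.2.2)
    (Φ : Mfd n → Mfd n)
    (hΦ : Φ = fun m => (m.1, m.2.1, NormedSpace.exp (m.1 • ρ) *ᵥ m.2.2)) :
    (∀ m X Y, pull n Φ G m X Y = G' m X Y) ∧
    Function.Bijective Φ ∧
    (∀ m : Mfd n, fderiv ℝ Φ m (dil n m) = dil n (Φ m)) ∧
    (∀ u : ℝ, Φ (u, 0, 0) = (u, 0, 0)) :=
  stmt0_general n ρ P₁ hρ G hG G' hG' Φ hΦ
end
end

section
/- Let 𝕌 ⊆ ℝ be a nonempty open interval and P : 𝕌 → Sym(n,ℝ) smooth. Suppose (a,b,C) and (a',b',C') are triples consisting of real constants a, b (resp. a', b') and constant skew-symmetric n×n matrices C (resp. C'), each satisfying the equation (a − bu)P'(u) − 2b·P(u) + P(u)C − CP(u) = 0 (resp. with (a',b',C')) for all u ∈ 𝕌, and suppose the vectors (a,b) and (a',b') are linearly independent in ℝ². Then P(u) = 0 for all u ∈ 𝕌. -/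
open Matrix

attribute [local instance] Matrix.normedAddCommGroup Matrix.normedSpace

noncomputable section

lemma aux_trace_zero {n : ℕ} (A : Matrix (Fin n) (Fin n) ℝ)
    (h : Matrix.trace (Aᵀ * A) = 0) : A = 0 := by
  have hsum : ∑ j : Fin n, ∑ k : Fin n, A k j * A k j = 0 := by
    simpa [Matrix.trace, Matrix.diag, Matrix.mul_apply, Matrix.transpose_apply] using h
  ext i j
  have h1 : ∀ j ∈ Finset.univ, (0:ℝ) ≤ ∑ k : Fin n, A k j * A k j := by
    intro j _; exact Finset.sum_nonneg fun k _ => mul_self_nonneg _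
  have h2 := (Finset.sum_eq_zero_iff_of_nonneg h1).mp hsum j (Finset.mem_univ j)
  have h3 : ∀ k ∈ Finset.univ, (0:ℝ) ≤ A k j * A k j := fun k _ => mul_self_nonneg _
  have h4 := (Finset.sum_eq_zero_iff_of_nonneg h3).mp h2 i (Finset.mem_univ i)
  simpa using mul_self_eq_zero.mp h4

/-- if the symmetric-matrix-valued function `P` on an interval `𝕌` satisfies
`(a − bu)P' − 2bP + [P,C] = 0` for two triples `(a,b,C)`, `(a',b',C')` with `C`, `C'`
constant skew matrices and `(a,b)`, `(a',b')` linearly independent in `ℝ²`, then `P ≡ 0`. -/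
theorem stmt3 (n : ℕ) (hn : 1 ≤ n)
    (U : Set ℝ) (hUopen : IsOpen U) (hUconv : Convex ℝ U) (hUne : U.Nonempty)
    (P : ℝ → Matrix (Fin n) (Fin n) ℝ)
    (hPsmooth : ContDiffOn ℝ (⊤ : ℕ∞) P U)
    (hPsymm : ∀ u ∈ U, (P u)ᵀ = P u)
    (a b a' b' : ℝ) (C C' : Matrix (Fin n) (Fin n) ℝ)
    (hC : Cᵀ = -C) (hC' : C'ᵀ = -C')
    (heq : ∀ u ∈ U,
      (a - b * u) • deriv P u - (2 * b) • P u + P u * C - C * P u = 0)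
    (heq' : ∀ u ∈ U,
      (a' - b' * u) • deriv P u - (2 * b') • P u + P u * C' - C' * P u = 0)
    (hindep : LinearIndependent ℝ ![(a, b), (a', b')]) :
    ∀ u ∈ U, P u = 0 := by
  -- determinant of the coefficient matrix is nonzero
  have hd : a * b' - a' * b ≠ 0 := by
    intro h
    have hli := Fintype.linearIndependent_iff.mp hindep
    have hb : b = 0 ∧ b' = 0 := by
      have h0 := hli ![b', -b] ?_
      · exact ⟨by simpa using h0 1, by simpa using h0 0⟩
      · simp [Fin.sum_univ_two, Prod.ext_iff]
        constructor <;> ring_nf <;> nlinarith [h]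
    have ha : a = 0 ∧ a' = 0 := by
      have h0 := hli ![a', -a] ?_
      · exact ⟨by simpa using h0 1, by simpa using h0 0⟩
      · simp [Fin.sum_univ_two, Prod.ext_iff, hb.1, hb.2]
        ring
    exact hindep.ne_zero 0 (by simp [ha.1, hb.1, Prod.ext_iff])
  intro u hu
  set Q := P u with hQ
  set D := deriv P u with hD
  -- trace identities
  have tcomm : ∀ X : Matrix (Fin n) (Fin n) ℝ,
      Matrix.trace (Q * (Q * X)) = Matrix.trace (Q * (X * Q)) := by
    intro X
    rw [← Matrix.mul_assoc, ← Matrix.mul_assoc]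
    exact (Matrix.trace_mul_cycle Q X Q).symm
  have t1 : (a - b * u) * Matrix.trace (Q * D) - (2 * b) * Matrix.trace (Q * Q) = 0 := by
    have := congrArg (fun M => Matrix.trace (Q * M)) (heq u hu)
    simp only [Matrix.mul_sub, Matrix.mul_add, Matrix.mul_smul, Matrix.trace_sub,
      Matrix.trace_add, Matrix.trace_smul, Matrix.mul_zero, Matrix.trace_zero,
      smul_eq_mul] at this
    rw [tcomm C] at this
    linarith [this]
  have t2 : (a' - b' * u) * Matrix.trace (Q * D) - (2 * b') * Matrix.trace (Q * Q) = 0 := by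
    have := congrArg (fun M => Matrix.trace (Q * M)) (heq' u hu)
    simp only [Matrix.mul_sub, Matrix.mul_add, Matrix.mul_smul, Matrix.trace_sub,
      Matrix.trace_add, Matrix.trace_smul, Matrix.mul_zero, Matrix.trace_zero,
      smul_eq_mul] at this
    rw [tcomm C'] at this
    linarith [this]
  have hT : Matrix.trace (Q * Q) = 0 := by
    have hcomb : (2 * (a * b' - a' * b)) * Matrix.trace (Q * Q) = 0 := by
      linear_combination (a' - b' * u) * t1 - (a - b * u) * t2
    have : (2 * (a * b' - a' * b)) ≠ 0 := by
      intro h; exact hd (by linarith)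
    exact (mul_eq_zero.mp hcomb).resolve_left this
  have : Matrix.trace (Qᵀ * Q) = 0 := by rw [hPsymm u hu]; exact hT
  exact aux_trace_zero Q this
end
end

section
/- Let a, b ∈ ℝ, let ρ be a constant skew-symmetric n×n real matrix, and let P₀ be a constant symmetric n×n real matrix. Let 𝕀 ⊆ ℝ be a nonempty open interval and u : 𝕀 → ℝ a smooth function with u'(t) = a − b·u(t) and a − b·u(t) > 0 for all t ∈ 𝕀 (so u is strictly increasing onto an interval 𝕌 = u(𝕀)). Define P : 𝕌 → Sym(n,ℝ) by P(u(t)) = (a − b·u(t))^{−2} e^{tρ} P₀ e^{−tρ}, and define P̃ : 𝕀 → Sym(n,ℝ) by P̃(t) = e^{tρ}(P₀ − (b²/4)I)e^{−tρ}. Then the diffeomorphism Φ : 𝕀×ℝ×ℝⁿ → 𝕌×ℝ×ℝⁿ given by Φ(t,V,X) = ( u(t), V − (b/4)XᵀX, (a − b·u(t))^{1/2} X ) satisfies Φ*G_β(P) = Ω · G_β(P̃), where Ω(t,V,X) = a − b·u(t); that is, Φ is a conformal isometry from (𝕀×ℝ×ℝⁿ, G_β(P̃)) onto (𝕌×ℝ×ℝⁿ,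 G_β(P)) with conformal factor a − bu. -/
/-!
Write `s = a - b u(t)`. Since `(√s)' = -(b/2) √s`, the differential of `Φ` at `(t, V, x)` sends
`(A, B, ξ)` to `(s A, B - (b/2) x·ξ, √s ξ - (b/2) √s A x)`. Inserted into `G_β(P)`, the `x·ξ`
terms produced by the shear of `V` cancel those produced by differentiating `√s`, which leaves
`-(b²/4) s |x|² A₁A₂`; and at the point `√s x` the coefficient of `du²` is
`s⁻¹ xᵀ e^{tρ} P₀ e^{-tρ} x`, so that after the factor `s²` from `du` the pullback is
`s · G_β(e^{tρ} P₀ e^{-tρ} - (b²/4) I) = s · G_β(P̃)`. Bijectivity holds because `u` is strictly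
increasing and `√s ≠ 0`.
-/

open Matrix

attribute [local instance] Matrix.normedAddCommGroup Matrix.normedSpace

noncomputable section

theorem hasFDerivAt_dotProduct_self {E : Type*} [NormedAddCommGroup E] [NormedSpace ℝ E]
    {n : ℕ} {f : E → Fin n → ℝ} {f' : E →L[ℝ] Fin n → ℝ} {x : E} (hf : HasFDerivAt f f' x) :
    HasFDerivAt (fun y => f y ⬝ᵥ f y)
      (∑ i, (2 * f x i) • (ContinuousLinearMap.proj i).comp f') x := by
  have hfi := hasFDerivAt_pi'.1 hf
  refine (HasFDerivAt.fun_sum fun i _ => (hfi i).mul (hfi i)).congr_fderiv ?_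
  refine Finset.sum_congr rfl fun i _ => ?_
  rw [two_mul, add_smul]

theorem mul_sub_smul_one_mul {R A : Type*} [CommRing R] [Ring A] [Algebra R A] {g h : A}
    (hgh : g * h = 1) (p : A) (c : R) : g * (p - c • 1) * h = g * p * h - c • 1 := by
  rw [mul_sub, sub_mul, mul_smul_comm, mul_one, smul_mul_assoc, hgh]

theorem Matrix.exp_smul_mul_exp_neg_smul {m : Type*} [Fintype m] [DecidableEq m]
    (ρ : Matrix m m ℝ) (t : ℝ) :
    NormedSpace.exp (t • ρ) * NormedSpace.exp (-(t • ρ)) = 1 := by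
  rw [← Matrix.exp_add_of_commute _ _ (Commute.refl (t • ρ)).neg_right, add_neg_cancel,
    NormedSpace.exp_zero]

theorem hasDerivAt_sqrt_of_linear_ode {u : ℝ → ℝ} {a b t : ℝ}
    (hu : HasDerivAt u (a - b * u t) t) (hpos : 0 < a - b * u t) :
    HasDerivAt (fun t => √(a - b * u t)) (-(b / 2) * √(a - b * u t)) t := by
  convert ((hu.const_mul b).const_sub a).sqrt hpos.ne' using 1
  field_simp
  rw [Real.sq_sqrt hpos.le]

section ShearScale

variable {n : ℕ}

def shearScale (u g : ℝ → ℝ) (c : ℝ) : Mfd n → Mfd n :=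
  fun m => (u m.1, m.2.1 - c * (m.2.2 ⬝ᵥ m.2.2), g m.1 • m.2.2)

theorem fderiv_shearScale_apply {u g : ℝ → ℝ} {u' g' t : ℝ} (c V : ℝ) (x : Fin n → ℝ)
    (hu : HasDerivAt u u' t) (hg : HasDerivAt g g' t) (X : Mfd n) :
    fderiv ℝ (shearScale u g c) (t, V, x) X =
      (u' * X.1, X.2.1 - 2 * c * (x ⬝ᵥ X.2.2), g t • X.2.2 + (g' * X.1) • x) := by
  have hfst : HasFDerivAt (𝕜 := ℝ) (fun m : Mfd n => m.1) _ (t, V, x) := hasFDerivAt_fst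
  have hv : HasFDerivAt (𝕜 := ℝ) (fun m : Mfd n => m.2.1) _ (t, V, x) := hasFDerivAt_snd.fst
  have hx : HasFDerivAt (𝕜 := ℝ) (fun m : Mfd n => m.2.2) _ (t, V, x) := hasFDerivAt_snd.snd
  have hΨ : HasFDerivAt (shearScale u g c) _ (t, V, x) := (hu.hasFDerivAt.comp _ hfst).prodMk
    ((hv.sub ((hasFDerivAt_dotProduct_self hx).const_mul c)).prodMk
      ((hg.hasFDerivAt.comp _ hfst).smul hx))
  rw [hΨ.fderiv]
  simp [dotProduct, Finset.mul_sum, mul_comm, mul_left_comm, mul_assoc]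

theorem bijOn_shearScale {u g : ℝ → ℝ} {I : Set ℝ} (c : ℝ) (hu : Set.InjOn u I)
    (hg : ∀ t ∈ I, g t ≠ 0) :
    Set.BijOn (shearScale (n := n) u g c) {m | m.1 ∈ I} {m | m.1 ∈ u '' I} := by
  refine ⟨fun m hm => ⟨m.1, hm, rfl⟩, ?_, ?_⟩
  · rintro ⟨t, V, x⟩ ht ⟨t', V', x'⟩ ht' h
    simp only [shearScale, Prod.mk.injEq] at h
    obtain ⟨hut, hV, hx⟩ := h
    obtain rfl : t = t' := hu ht ht' hut
    obtain rfl : x = x' := smul_right_injective _ (hg t ht) hx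
    obtain rfl : V = V' := by simpa using hV
    rfl
  · rintro ⟨_, V, y⟩ ⟨t, ht, rfl⟩
    refine ⟨(t, V + c * ((g t)⁻¹ • y ⬝ᵥ (g t)⁻¹ • y), (g t)⁻¹ • y), ht, ?_⟩
    simp [shearScale, smul_smul, mul_inv_cancel₀ (hg t ht)]

theorem pull_Gb_shearScale {P Pt : ℝ → Matrix (Fin n) (Fin n) ℝ} {M : Matrix (Fin n) (Fin n) ℝ}
    {u : ℝ → ℝ} {a b t : ℝ} (hu : HasDerivAt u (a - b * u t) t) (hpos : 0 < a - b * u t)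
    (hP : P (u t) = ((a - b * u t) ^ 2)⁻¹ • M) (hPt : Pt t = M - (b ^ 2 / 4 : ℝ) • 1)
    (V : ℝ) (x : Fin n → ℝ) (X Y : Mfd n) :
    pull n (shearScale u (fun t => √(a - b * u t)) (b / 4)) (Gb n P) (t, V, x) X Y =
      (a - b * u t) * Gb n Pt (t, V, x) X Y := by
  have hDΦ := fderiv_shearScale_apply (b / 4) V x hu (hasDerivAt_sqrt_of_linear_ode hu hpos)
  simp only [pull, Gb, hDΦ, shearScale]
  generalize a - b * u t = s at hpos hP ⊢
  have hq : √s ^ 2 = s := Real.sq_sqrt hpos.le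
  have hQP : (√s • x) ⬝ᵥ (P (u t) *ᵥ (√s • x)) = s⁻¹ * (x ⬝ᵥ (M *ᵥ x)) := by
    simp only [hP, smul_mulVec, mulVec_smul, smul_dotProduct, dotProduct_smul, smul_eq_mul]
    field_simp
    rw [hq]
  have hQPt : x ⬝ᵥ (Pt t *ᵥ x) = x ⬝ᵥ (M *ᵥ x) - b ^ 2 / 4 * (x ⬝ᵥ x) := by
    rw [hPt, sub_mulVec, smul_mulVec, one_mulVec, dotProduct_sub, dotProduct_smul, smul_eq_mul]
  simp only [hQP, hQPt, add_dotProduct, dotProduct_add, smul_dotProduct, dotProduct_smul,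
    smul_eq_mul, dotProduct_comm _ x]
  field_simp
  rw [hq]
  ring

end ShearScale

theorem stmt5_general (n : ℕ)
    (a b : ℝ) (ρ P₀ : Matrix (Fin n) (Fin n) ℝ)
    (I : Set ℝ) (hIconv : Convex ℝ I)
    (u : ℝ → ℝ)
    (hode : ∀ t ∈ I, HasDerivAt u (a - b * u t) t)
    (hpos : ∀ t ∈ I, 0 < a - b * u t)
    (P : ℝ → Matrix (Fin n) (Fin n) ℝ)
    (hP : ∀ t ∈ I, P (u t) = ((a - b * u t) ^ 2)⁻¹ •
      (NormedSpace.exp (t • ρ) * P₀ * NormedSpace.exp (-(t • ρ))))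
    (Pt : ℝ → Matrix (Fin n) (Fin n) ℝ)
    (hPt : ∀ t : ℝ, Pt t = NormedSpace.exp (t • ρ) *
      (P₀ - ((b ^ 2 / 4) : ℝ) • (1 : Matrix (Fin n) (Fin n) ℝ)) *
      NormedSpace.exp (-(t • ρ)))
    (Φ : Mfd n → Mfd n)
    (hΦ : Φ = fun m =>
      (u m.1, m.2.1 - (b / 4) * (m.2.2 ⬝ᵥ m.2.2), Real.sqrt (a - b * u m.1) • m.2.2)) :
    (∀ m ∈ {m : Mfd n | m.1 ∈ I}, ∀ X Y,
      pull n Φ (Gb n P) m X Y = (a - b * u m.1) * Gb n Pt m X Y) ∧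
    Set.BijOn Φ {m : Mfd n | m.1 ∈ I} {m : Mfd n | m.1 ∈ u '' I} := by
  obtain rfl : Φ = shearScale u (fun t => √(a - b * u t)) (b / 4) := hΦ
  have hmono : StrictMonoOn u I :=
    strictMonoOn_of_deriv_pos hIconv (fun t ht => (hode t ht).continuousAt.continuousWithinAt)
      fun t ht => (hode t (interior_subset ht)).deriv ▸ hpos t (interior_subset ht)
  refine ⟨?_, bijOn_shearScale (b / 4) hmono.injOn fun t ht => (Real.sqrt_pos.2 (hpos t ht)).ne'⟩
  rintro ⟨t, V, x⟩ ht X Y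
  have hPt' := (hPt t).trans (mul_sub_smul_one_mul (Matrix.exp_smul_mul_exp_neg_smul ρ t) _ _)
  exact pull_Gb_shearScale (hode t ht) (hpos t ht) (hP t ht) hPt' V x X Y

/-- `Φ(t,V,X) = (u(t), V − (b/4)XᵀX, (a − bu(t))^{1/2} X)` is a conformal
isometry from `G_β(P̃)` onto `G_β(P)`, with conformal factor `a − bu`, where
`u' = a − bu > 0`, `P(u(t)) = (a − bu(t))⁻² e^{tρ} P₀ e^{−tρ}` and
`P̃(t) = e^{tρ}(P₀ − (b²/4)I)e^{−tρ}`. -/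
theorem stmt5 (n : ℕ) (hn : 1 ≤ n)
    (a b : ℝ) (ρ P₀ : Matrix (Fin n) (Fin n) ℝ)
    (hρ : ρᵀ = -ρ) (hP₀ : P₀ᵀ = P₀)
    (I : Set ℝ) (hIopen : IsOpen I) (hIconv : Convex ℝ I) (hIne : I.Nonempty)
    (u : ℝ → ℝ) (husmooth : ContDiffOn ℝ (⊤ : ℕ∞) u I)
    (hode : ∀ t ∈ I, HasDerivAt u (a - b * u t) t)
    (hpos : ∀ t ∈ I, 0 < a - b * u t)
    (P : ℝ → Matrix (Fin n) (Fin n) ℝ)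
    (hP : ∀ t ∈ I, P (u t) = ((a - b * u t) ^ 2)⁻¹ •
      (NormedSpace.exp (t • ρ) * P₀ * NormedSpace.exp (-(t • ρ))))
    (Pt : ℝ → Matrix (Fin n) (Fin n) ℝ)
    (hPt : ∀ t : ℝ, Pt t = NormedSpace.exp (t • ρ) *
      (P₀ - ((b ^ 2 / 4) : ℝ) • (1 : Matrix (Fin n) (Fin n) ℝ)) *
      NormedSpace.exp (-(t • ρ)))
    (Φ : Mfd n → Mfd n)
    (hΦ : Φ = fun m =>
      (u m.1, m.2.1 - (b / 4) * (m.2.2 ⬝ᵥ m.2.2), Real.sqrt (a - b * u m.1) • m.2.2)) :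
    (∀ m ∈ {m : Mfd n | m.1 ∈ I}, ∀ X Y,
      pull n Φ (Gb n P) m X Y = (a - b * u m.1) * Gb n Pt m X Y) ∧
    Set.BijOn Φ {m : Mfd n | m.1 ∈ I} {m : Mfd n | m.1 ∈ u '' I} :=
  stmt5_general n a b ρ P₀ I hIconv u hode hpos P hP Pt hPt Φ hΦ
end
end

section
/- Let n ≥ 2, let 𝕌 ⊆ ℝ be a nonempty open interval containing a point u₀, and let p : 𝕌 → Sym(n,ℝ) be smooth. Suppose there exists a smooth vector field D on 𝕄 = 𝕌×ℝ×ℝⁿ satisfying ℒ_D G_β(p) = 2·G_β(p) (an infinitesimal dilation) and D(u₀, v, 0) = 0 for all v ∈ ℝ (D vanishes along the null geodesic {u = u₀, x = 0}). Then p(u) = 0 for every u ∈ 𝕌; that is, G_β(p) is the flat metric 2 du dv − dxᵀdx. -/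
open Matrix

attribute [local instance] Matrix.normedAddCommGroup Matrix.normedSpace

noncomputable section

/-- Lie derivative of a field of bilinear forms along a vector field. -/
def lieD (n : ℕ) (V : Mfd n → Mfd n) (G : Mfd n → Mfd n → Mfd n → ℝ) :
    Mfd n → Mfd n → Mfd n → ℝ := fun m X Y =>
  fderiv ℝ (fun m' => G m' X Y) m (V m)
    + G m (fderiv ℝ V m X) Y + G m X (fderiv ℝ V m Y)

/-!
Write `D = (A, B, W)` (`compU`, `compV`, `compX`) in the coordinates `(u, v, x)` and
`Q = xᵀ p(u) x` (`quadForm p`). The components of `ℒ_D G = 2 G` form an overdetermined first-order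
system. Playing the symmetry of second derivatives against the skew-symmetry imposed by the
`(x, x)`-equations `∂ⱼWⁱ + ∂ᵢWʲ = 2δᵢⱼ` kills the gradient of `∂ₓA`, and the `v`-derivative of the
`(u, u)`-equation kills `∂ᵤ∂ᵤA`; since `D` vanishes along the null geodesic `{u = u₀, x = 0}`, this
gives `A = 2(u - u₀)`. The same mechanism makes the `x`-Jacobian `N` of `W` constant, with
`N + Nᵀ = 2`, and kills `∂ₓ∂ₓ∂ᵤB`. Differentiating the `(u, u)`-equation twice in `x` on the axis
`x = 0` leaves the matrix identity `(u - u₀)(p' + p'ᵀ) + Nᵀp + pN + 2p = 0`; its trace against `p`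
is the Euler-type equation `(u - u₀) f' = -4 f` for `f = tr p²`. So `(u - u₀)⁴ f` is constant,
hence zero, and `p = 0`.
-/

open Set
open scoped ContDiff

section DirDeriv

variable {E F : Type*} [NormedAddCommGroup E] [NormedSpace ℝ E] [NormedAddCommGroup F]
  [NormedSpace ℝ F] {Ω : Set E} {f g : E → ℝ} {φ : E → F} {m X : E}

def dirDeriv (X : E) (f : E → ℝ) : E → ℝ := fun m => fderiv ℝ f m X

theorem ContDiffOn.differentiableAt_of_isOpen (hφ : ContDiffOn ℝ ∞ φ Ω) (hΩ : IsOpen Ω)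
    (hm : m ∈ Ω) : DifferentiableAt ℝ φ m :=
  (hφ.differentiableOn (by simp)).differentiableAt (hΩ.mem_nhds hm)

theorem ContDiffOn.dirDeriv (hΩ : IsOpen Ω) (X : E) (hf : ContDiffOn ℝ ∞ f Ω) :
    ContDiffOn ℝ ∞ (_root_.dirDeriv X f) Ω :=
  (hf.fderiv_of_isOpen hΩ (le_of_eq ENat.coe_top_add_one)).clm_apply contDiffOn_const

@[fun_prop]
theorem ContDiffOn.fun_dirDeriv (hΩ : IsOpen Ω) (X : E) (hf : ContDiffOn ℝ ∞ f Ω) :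
    ContDiffOn ℝ ∞ (fun m => _root_.dirDeriv X f m) Ω :=
  hf.dirDeriv hΩ X

theorem dirDeriv_clm_comp (L : F →L[ℝ] ℝ) (hφ : DifferentiableAt ℝ φ m) (X : E) :
    dirDeriv X (L ∘ φ) m = L (fderiv ℝ φ m X) := by
  rw [dirDeriv, fderiv_comp m L.differentiableAt hφ, L.fderiv]
  rfl

theorem dirDeriv_congr (hΩ : IsOpen Ω) (h : EqOn f g Ω) (X : E) :
    EqOn (dirDeriv X f) (dirDeriv X g) Ω := fun m hm => by
  have hfg : f =ᶠ[nhds m] g := Filter.eventually_of_mem (hΩ.mem_nhds hm) h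
  simp only [dirDeriv, hfg.fderiv_eq]

@[simp]
theorem dirDeriv_const (X : E) (c : ℝ) : dirDeriv X (fun _ => c) = 0 := by
  ext; simp [dirDeriv]

theorem dirDeriv_eqOn_zero_of_eqOn_const (hΩ : IsOpen Ω) {c : ℝ} (h : EqOn f (fun _ => c) Ω)
    (X : E) : EqOn (dirDeriv X f) 0 Ω := by
  simpa using dirDeriv_congr hΩ h X

theorem dirDeriv_add (hΩ : IsOpen Ω) (hf : ContDiffOn ℝ ∞ f Ω) (hg : ContDiffOn ℝ ∞ g Ω)
    (hm : m ∈ Ω) : dirDeriv X (fun m => f m + g m) m = dirDeriv X f m + dirDeriv X g m := by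
  simp [dirDeriv, fderiv_fun_add (hf.differentiableAt_of_isOpen hΩ hm)
    (hg.differentiableAt_of_isOpen hΩ hm)]

theorem dirDeriv_sub (hΩ : IsOpen Ω) (hf : ContDiffOn ℝ ∞ f Ω) (hg : ContDiffOn ℝ ∞ g Ω)
    (hm : m ∈ Ω) : dirDeriv X (fun m => f m - g m) m = dirDeriv X f m - dirDeriv X g m := by
  simp [dirDeriv, fderiv_fun_sub (hf.differentiableAt_of_isOpen hΩ hm)
    (hg.differentiableAt_of_isOpen hΩ hm)]

theorem dirDeriv_mul (hΩ : IsOpen Ω) (hf : ContDiffOn ℝ ∞ f Ω) (hg : ContDiffOn ℝ ∞ g Ω)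
    (hm : m ∈ Ω) :
    dirDeriv X (fun m => f m * g m) m = dirDeriv X f m * g m + f m * dirDeriv X g m := by
  simp only [dirDeriv, fderiv_fun_mul (hf.differentiableAt_of_isOpen hΩ hm)
    (hg.differentiableAt_of_isOpen hΩ hm), _root_.add_apply, _root_.smul_apply, smul_eq_mul]
  ring

theorem dirDeriv_sum {ι : Type*} {s : Finset ι} {F : ι → E → ℝ} (hΩ : IsOpen Ω)
    (hF : ∀ i ∈ s, ContDiffOn ℝ ∞ (F i) Ω) (hm : m ∈ Ω) :
    dirDeriv X (fun m => ∑ i ∈ s, F i m) m = ∑ i ∈ s, dirDeriv X (F i) m := by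
  simp [dirDeriv, fderiv_fun_sum fun i hi => (hF i hi).differentiableAt_of_isOpen hΩ hm]

theorem dirDeriv_eq_neg_of_add_eqOn_const (hΩ : IsOpen Ω) (hf : ContDiffOn ℝ ∞ f Ω)
    (hg : ContDiffOn ℝ ∞ g Ω) {c : ℝ} (h : EqOn (fun m => f m + g m) (fun _ => c) Ω)
    (hm : m ∈ Ω) : dirDeriv X f m = -dirDeriv X g m := by
  have := dirDeriv_eqOn_zero_of_eqOn_const hΩ h X hm
  rw [dirDeriv_add hΩ hf hg hm] at this
  simpa [eq_neg_iff_add_eq_zero] using this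

theorem dirDeriv_comm (hΩ : IsOpen Ω) (hf : ContDiffOn ℝ ∞ f Ω) (X Y : E) :
    EqOn (dirDeriv Y (dirDeriv X f)) (dirDeriv X (dirDeriv Y f)) Ω := fun m hm => by
  have hf' := hf.contDiffAt (hΩ.mem_nhds hm)
  have hd : DifferentiableAt ℝ (fderiv ℝ f) m :=
    (hf'.fderiv_right (le_of_eq ENat.coe_top_add_one)).differentiableAt (by simp)
  have key : ∀ Z W : E, dirDeriv W (dirDeriv Z f) m = fderiv ℝ (fderiv ℝ f) m W Z := fun Z W => by
    rw [dirDeriv, show dirDeriv Z f = fun m => fderiv ℝ f m Z from rfl,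
      fderiv_clm_apply hd (differentiableAt_const Z)]
    simp
  rw [key, key, hf'.isSymmSndFDerivAt (by
    rw [minSmoothness_of_isRCLikeNormedField]; exact WithTop.coe_le_coe.mpr le_top)]

theorem fderiv_apply_eq_of_forall_add_smul (hφ : DifferentiableAt ℝ φ m) {c : F}
    (h : ∀ t : ℝ, φ (m + t • X) = φ m + t • c) : fderiv ℝ φ m X = c := by
  have hline : HasDerivAt (fun t : ℝ => m + t • X) X 0 := by
    simpa using ((hasDerivAt_id (0 : ℝ)).smul_const X).const_add m
  have h1 := hφ.hasFDerivAt.comp_hasDerivAt_of_eq 0 hline (by simp)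
  have h2 : HasDerivAt (fun t : ℝ => φ (m + t • X)) c 0 := by
    simp only [h]; simpa using ((hasDerivAt_id (0 : ℝ)).smul_const c).const_add (φ m)
  exact h1.unique h2

end DirDeriv

theorem Matrix.trace_mul_eq_of_add_transpose_eq_two {ι R : Type*} [Fintype ι] [DecidableEq ι]
    [CommRing R] {S T N : Matrix ι ι R} {a : R} (hN : N + Nᵀ = 2)
    (h : a • T + Nᵀ * S + S * N + (2 : R) • S = 0) :
    a * trace (S * T) = -4 * trace (S * S) := by
  have htr := congrArg (fun M => trace (S * M)) h
  have hcyc : trace (S * (Nᵀ * S)) + trace (S * (S * N)) = 2 * trace (S * S) :=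
    calc trace (S * (Nᵀ * S)) + trace (S * (S * N))
        = trace (Nᵀ * (S * S)) + trace (N * (S * S)) := by
          rw [trace_mul_comm S, Matrix.mul_assoc, ← Matrix.mul_assoc S S N,
            trace_mul_comm (S * S) N]
      _ = trace ((N + Nᵀ) * (S * S)) := by rw [Matrix.add_mul, trace_add, add_comm]
      _ = 2 * trace (S * S) := by rw [hN, two_mul, trace_add, two_mul]
  simp only [Matrix.mul_add, Matrix.mul_smul, trace_add, trace_smul, Matrix.mul_zero, trace_zero,
    smul_eq_mul] at htr
  linear_combination htr - hcyc

theorem hasDerivAt_trace_mul_self {ι : Type*} [Fintype ι] {q : ℝ → Matrix ι ι ℝ}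
    {q' : Matrix ι ι ℝ} {u : ℝ} (hq : HasDerivAt q q' u) :
    HasDerivAt (fun t => trace (q t * q t)) (2 * trace (q u * q')) u := by
  have hentry (i j : ι) : HasDerivAt (fun t => q t i j) (q' i j) u :=
    hasDerivAt_pi.mp (hasDerivAt_pi.mp hq i) j
  have h : HasDerivAt (fun t => ∑ i, ∑ j, q t i j * q t j i)
      (∑ i, ∑ j, (q' i j * q u j i + q u i j * q' j i)) u :=
    HasDerivAt.fun_sum fun i _ => HasDerivAt.fun_sum fun j _ => (hentry i j).mul (hentry j i)
  convert h using 1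
  · ext t; simp [trace, Matrix.mul_apply]
  · simp only [trace, diag, Matrix.mul_apply, Finset.sum_add_distrib, Finset.mul_sum]
    rw [Finset.sum_comm (f := fun i j => q' i j * q u j i)]
    simp only [← Finset.sum_add_distrib]
    exact Finset.sum_congr rfl fun i _ => Finset.sum_congr rfl fun j _ => by ring

theorem eqOn_zero_of_sub_mul_deriv_eq {f f' : ℝ → ℝ} {U : Set ℝ} {u₀ : ℝ} {k : ℕ}
    (hU : Convex ℝ U) (hu₀ : u₀ ∈ U) (hk : k ≠ 0) (hf : ∀ u ∈ U, HasDerivAt f (f' u) u)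
    (h : ∀ u ∈ U, (u - u₀) * f' u = -k * f u) : EqOn f 0 U := by
  obtain ⟨j, rfl⟩ := Nat.exists_eq_succ_of_ne_zero hk
  -- `(u - u₀)ᵏ f` has derivative `(u - u₀)ᵏ⁻¹ (k f + (u - u₀) f') = 0`
  have hg (t : ℝ) (ht : t ∈ U) :
      HasDerivWithinAt (fun t => (t - u₀) ^ (j + 1) * f t) 0 U t := by
    have hpow : HasDerivAt (fun t => (t - u₀) ^ (j + 1)) ((j + 1 : ℕ) * (t - u₀) ^ j) t := by
      simpa using ((hasDerivAt_id t).sub_const u₀).fun_pow (j + 1)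
    refine ((hpow.mul (hf t ht)).congr_deriv ?_).hasDerivWithinAt
    linear_combination (t - u₀) ^ j * h t ht
  intro u hu
  have hconst :=
    hU.norm_image_sub_le_of_norm_hasDerivWithin_le hg (fun _ _ => le_of_eq norm_zero) hu₀ hu
  rw [zero_mul, norm_le_zero_iff, sub_eq_zero] at hconst
  rcases eq_or_ne u u₀ with rfl | hne
  · have := h u hu
    rw [sub_self, zero_mul, zero_eq_mul] at this
    exact this.resolve_left (by push_cast; linarith [(j.cast_nonneg : (0 : ℝ) ≤ j)])
  · simpa [sub_ne_zero.mpr hne] using hconst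

namespace Mfd

variable {n : ℕ} {q : ℝ → Matrix (Fin n) (Fin n) ℝ} {U : Set ℝ}

def eU : Mfd n := (1, 0, 0)
def eV : Mfd n := (0, 1, 0)
def eX (i : Fin n) : Mfd n := (0, 0, Pi.single i 1)

@[simp] theorem eU_fst : (eU : Mfd n).1 = 1 := rfl
@[simp] theorem eU_snd_fst : (eU : Mfd n).2.1 = 0 := rfl
@[simp] theorem eU_snd_snd : (eU : Mfd n).2.2 = 0 := rfl
@[simp] theorem eV_fst : (eV : Mfd n).1 = 0 := rfl
@[simp] theorem eV_snd_fst : (eV : Mfd n).2.1 = 1 := rfl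
@[simp] theorem eV_snd_snd : (eV : Mfd n).2.2 = 0 := rfl
@[simp] theorem eX_fst (i : Fin n) : (eX i).1 = 0 := rfl
@[simp] theorem eX_snd_fst (i : Fin n) : (eX i).2.1 = 0 := rfl
@[simp] theorem eX_snd_snd (i : Fin n) : (eX i).2.2 = Pi.single i 1 := rfl

theorem eq_sum_smul (X : Mfd n) : X = X.1 • eU + X.2.1 • eV + ∑ i, X.2.2 i • eX i := by
  ext
  · simp [Prod.fst_sum]
  · simp [Prod.snd_sum, Prod.fst_sum]
  · simp [Prod.snd_sum, Finset.sum_apply, Pi.single_apply]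

theorem map_eq_sum (L : Mfd n →L[ℝ] ℝ) (X : Mfd n) :
    L X = X.1 * L eU + X.2.1 * L eV + ∑ i, X.2.2 i * L (eX i) := by
  conv_lhs => rw [eq_sum_smul X]
  simp

theorem fderiv_apply_eq_sum (f : Mfd n → ℝ) (m X : Mfd n) :
    fderiv ℝ f m X = X.1 * dirDeriv eU f m + X.2.1 * dirDeriv eV f m
      + ∑ i, X.2.2 i * dirDeriv (eX i) f m :=
  map_eq_sum _ X

theorem eq_of_dirDeriv_eq_zero {Ω : Set (Mfd n)} {f : Mfd n → ℝ} (hΩ : IsOpen Ω)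
    (hΩc : Convex ℝ Ω) (hf : ContDiffOn ℝ ∞ f Ω) (hU : EqOn (dirDeriv eU f) 0 Ω)
    (hV : EqOn (dirDeriv eV f) 0 Ω) (hX : ∀ i, EqOn (dirDeriv (eX i) f) 0 Ω)
    {m m' : Mfd n} (hm : m ∈ Ω) (hm' : m' ∈ Ω) : f m = f m' := by
  refine hΩc.is_const_of_fderivWithin_eq_zero (hf.differentiableOn (by simp)) (fun x hx => ?_)
    hm hm'
  rw [fderivWithin_of_isOpen hΩ hx]
  refine ContinuousLinearMap.ext fun X => ?_
  simp [fderiv_apply_eq_sum, hU hx, hV hx, fun i => hX i hx]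

def slab (n : ℕ) (U : Set ℝ) : Set (Mfd n) := {m | m.1 ∈ U}

theorem isOpen_slab (hU : IsOpen U) : IsOpen (slab n U) := hU.preimage continuous_fst

theorem convex_slab (hU : Convex ℝ U) : Convex ℝ (slab n U) :=
  hU.linear_preimage (LinearMap.fst ℝ ℝ _)

theorem contDiffOn_comp_fst {c : ℝ → ℝ} (hc : ContDiffOn ℝ ∞ c U) :
    ContDiffOn ℝ ∞ (fun m : Mfd n => c m.1) (slab n U) :=
  hc.comp contDiffOn_fst fun _ hm => hm

theorem contDiffOn_coord (i : Fin n) : ContDiffOn ℝ ∞ (fun m : Mfd n => m.2.2 i) (slab n U) :=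
  ((contDiff_apply ℝ ℝ i).comp (contDiff_snd.comp contDiff_snd)).contDiffOn

def quadForm (q : ℝ → Matrix (Fin n) (Fin n) ℝ) : Mfd n → ℝ := fun m => m.2.2 ⬝ᵥ (q m.1 *ᵥ m.2.2)

theorem quadForm_eq_sum (q : ℝ → Matrix (Fin n) (Fin n) ℝ) :
    quadForm q = fun m => ∑ i, ∑ j, q m.1 i j * (m.2.2 i * m.2.2 j) := by
  ext m
  simp [quadForm, dotProduct, mulVec, Finset.mul_sum, mul_left_comm]

theorem contDiffOn_quadForm (hq : ContDiffOn ℝ ∞ q U) : ContDiffOn ℝ ∞ (quadForm q) (slab n U) := by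
  rw [quadForm_eq_sum]
  refine ContDiffOn.sum fun i _ => ContDiffOn.sum fun j _ => ?_
  exact (contDiffOn_comp_fst (contDiffOn_pi.mp (contDiffOn_pi.mp hq i) j)).mul
    ((contDiffOn_coord i).mul (contDiffOn_coord j))

theorem fderiv_quadForm_apply {m : Mfd n} (hq : DifferentiableAt ℝ q m.1) (X : Mfd n) :
    fderiv ℝ (quadForm q) m X = X.1 * quadForm (deriv q) m
      + ∑ i, ∑ j, q m.1 i j * (X.2.2 i * m.2.2 j + m.2.2 i * X.2.2 j) := by
  have hx : ∀ i : Fin n, HasFDerivAt (fun m : Mfd n => m.2.2 i)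
      ((ContinuousLinearMap.proj i).comp ((ContinuousLinearMap.snd ℝ ℝ (Fin n → ℝ)).comp
        (ContinuousLinearMap.snd ℝ ℝ (ℝ × (Fin n → ℝ))))) m :=
    fun i => ContinuousLinearMap.hasFDerivAt (x := m) (ContinuousLinearMap.proj i |>.comp <|
      (ContinuousLinearMap.snd ℝ ℝ (Fin n → ℝ)).comp (ContinuousLinearMap.snd ℝ ℝ _))
  have hqij : ∀ i j, HasFDerivAt (fun m : Mfd n => q m.1 i j)
      (deriv q m.1 i j • ContinuousLinearMap.fst ℝ ℝ (ℝ × (Fin n → ℝ))) m := fun i j =>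
    (hasDerivAt_pi.mp (hasDerivAt_pi.mp hq.hasDerivAt i) j).comp_hasFDerivAt m hasFDerivAt_fst
  have hQ : HasFDerivAt (fun m : Mfd n => ∑ i, ∑ j, q m.1 i j * (m.2.2 i * m.2.2 j)) _ m :=
    HasFDerivAt.fun_sum fun i _ => HasFDerivAt.fun_sum fun j _ =>
      (hqij i j).mul ((hx i).mul (hx j))
  rw [quadForm_eq_sum, hQ.fderiv, quadForm_eq_sum]
  simp only [_root_.sum_apply, _root_.add_apply,
    _root_.smul_apply, ContinuousLinearMap.comp_apply, smul_eq_mul,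
    ContinuousLinearMap.coe_fst', ContinuousLinearMap.coe_snd', ContinuousLinearMap.proj_apply,
    Finset.mul_sum, ← Finset.sum_add_distrib]
  refine Finset.sum_congr rfl fun i _ => Finset.sum_congr rfl fun j _ => ?_
  ring

theorem dirDeriv_comp_fst {c : ℝ → ℝ} {m : Mfd n} (hc : DifferentiableAt ℝ c m.1) (X : Mfd n) :
    dirDeriv X (fun m : Mfd n => c m.1) m = X.1 * deriv c m.1 := by
  have h := (hc.hasDerivAt.comp_hasFDerivAt m
    (ContinuousLinearMap.fst ℝ ℝ (ℝ × (Fin n → ℝ))).hasFDerivAt).fderiv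
  rw [dirDeriv, show (fun m : Mfd n => c m.1) = c ∘ Prod.fst from rfl, h]
  simp [mul_comm]

theorem dirDeriv_eV_quadForm (hU : IsOpen U) (hq : ContDiffOn ℝ ∞ q U) :
    EqOn (dirDeriv eV (quadForm q)) 0 (slab n U) := fun m hm => by
  simp [dirDeriv, fderiv_quadForm_apply (hq.differentiableAt_of_isOpen hU hm)]

theorem dirDeriv_eU_quadForm (hU : IsOpen U) (hq : ContDiffOn ℝ ∞ q U) :
    EqOn (dirDeriv eU (quadForm q)) (quadForm (deriv q)) (slab n U) := fun m hm => by
  simp [dirDeriv, fderiv_quadForm_apply (hq.differentiableAt_of_isOpen hU hm)]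

theorem dirDeriv_eX_quadForm (hU : IsOpen U) (hq : ContDiffOn ℝ ∞ q U) (k : Fin n) :
    EqOn (dirDeriv (eX k) (quadForm q)) (fun m => ∑ j, (q m.1 k j + q m.1 j k) * m.2.2 j)
      (slab n U) := fun m hm => by
  simp [dirDeriv, fderiv_quadForm_apply (hq.differentiableAt_of_isOpen hU hm), Pi.single_apply,
    add_mul, mul_add, Finset.sum_add_distrib, mul_ite, ite_mul, Finset.sum_ite_eq']

theorem dirDeriv_eX_dirDeriv_eX_quadForm (hU : IsOpen U) (hq : ContDiffOn ℝ ∞ q U) (k l : Fin n) :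
    EqOn (dirDeriv (eX l) (dirDeriv (eX k) (quadForm q))) (fun m => q m.1 k l + q m.1 l k)
      (slab n U) := fun m hm => by
  rw [dirDeriv_congr (isOpen_slab hU) (dirDeriv_eX_quadForm hU hq k) (eX l) hm]
  have hsmooth : ContDiffOn ℝ ∞ (fun m : Mfd n => ∑ j, (q m.1 k j + q m.1 j k) * m.2.2 j)
      (slab n U) := ContDiffOn.sum fun j _ =>
    (contDiffOn_comp_fst ((contDiffOn_pi.mp (contDiffOn_pi.mp hq k) j).add
      (contDiffOn_pi.mp (contDiffOn_pi.mp hq j) k))).mul (contDiffOn_coord j)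
  refine fderiv_apply_eq_of_forall_add_smul
    (hsmooth.differentiableAt_of_isOpen (isOpen_slab hU) hm) fun t => ?_
  simp only [Prod.fst_add, Prod.smul_fst, eX_fst, smul_eq_mul, mul_zero, add_zero, Prod.snd_add,
    Prod.smul_snd, eX_snd_snd, Pi.add_apply, Pi.smul_apply, Pi.single_apply, mul_ite, mul_one,
    mul_add, Finset.sum_add_distrib, Finset.sum_ite_eq', Finset.mem_univ, ↓reduceIte,
    add_right_inj]
  ring

theorem dirDeriv_eV_dirDeriv_quadForm (hU : IsOpen U) (hq : ContDiffOn ℝ ∞ q U) (X : Mfd n) :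
    EqOn (dirDeriv eV (dirDeriv X (quadForm q))) 0 (slab n U) := fun m hm => by
  rw [dirDeriv_comm (isOpen_slab hU) (contDiffOn_quadForm hq) X eV hm]
  exact dirDeriv_eqOn_zero_of_eqOn_const (isOpen_slab hU) (c := 0) (dirDeriv_eV_quadForm hU hq) X hm

theorem dirDeriv_eX_dirDeriv_eX_dirDeriv_eX_quadForm (hU : IsOpen U) (hq : ContDiffOn ℝ ∞ q U)
    (i k l : Fin n) :
    EqOn (dirDeriv (eX l) (dirDeriv (eX k) (dirDeriv (eX i) (quadForm q)))) 0 (slab n U) :=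
  fun m hm => by
  have hqm := hq.differentiableAt_of_isOpen hU hm
  rw [dirDeriv_congr (isOpen_slab hU) (dirDeriv_eX_dirDeriv_eX_quadForm hU hq i k) _ hm,
    dirDeriv_comp_fst (c := fun u => q u i k + q u k i) (by fun_prop)]
  simp

end Mfd

open Mfd

variable {n : ℕ} {U : Set ℝ} {p : ℝ → Matrix (Fin n) (Fin n) ℝ} {D : Mfd n → Mfd n}

structure IsDilation (U : Set ℝ) (p : ℝ → Matrix (Fin n) (Fin n) ℝ) (D : Mfd n → Mfd n) :
    Prop where
  isOpen : IsOpen U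
  contDiffOn_p : ContDiffOn ℝ ∞ p U
  contDiffOn_D : ContDiffOn ℝ ∞ D (slab n U)
  lieD_eq : ∀ m ∈ slab n U, ∀ X Y, lieD n D (Gb n p) m X Y = 2 * Gb n p m X Y

def compU (D : Mfd n → Mfd n) : Mfd n → ℝ := fun m => (D m).1
def compV (D : Mfd n → Mfd n) : Mfd n → ℝ := fun m => (D m).2.1
def compX (D : Mfd n → Mfd n) (i : Fin n) : Mfd n → ℝ := fun m => (D m).2.2 i

def xJacobian (D : Mfd n → Mfd n) (m : Mfd n) : Matrix (Fin n) (Fin n) ℝ :=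
  Matrix.of fun i j => dirDeriv (eX j) (compX D i) m

theorem Gb_apply (m X Y : Mfd n) :
    Gb n p m X Y = X.1 * Y.2.1 + Y.1 * X.2.1 + quadForm p m * X.1 * Y.1 - X.2.2 ⬝ᵥ Y.2.2 := rfl

namespace IsDilation

variable (hD : IsDilation U p D)
include hD

theorem isOpen_slab : IsOpen (slab n U) := Mfd.isOpen_slab hD.isOpen

theorem contDiffOn_compU : ContDiffOn ℝ ∞ (compU D) (slab n U) :=
  contDiff_fst.comp_contDiffOn hD.contDiffOn_D

theorem contDiffOn_compV : ContDiffOn ℝ ∞ (compV D) (slab n U) :=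
  (contDiff_fst.comp contDiff_snd).comp_contDiffOn hD.contDiffOn_D

theorem contDiffOn_compX (i : Fin n) : ContDiffOn ℝ ∞ (compX D i) (slab n U) :=
  ((contDiff_apply ℝ ℝ i).comp (contDiff_snd.comp contDiff_snd)).comp_contDiffOn hD.contDiffOn_D

theorem contDiffOn_deriv_p : ContDiffOn ℝ ∞ (deriv p) U :=
  hD.contDiffOn_p.deriv_of_isOpen hD.isOpen (le_of_eq ENat.coe_top_add_one)

theorem contDiffOn_quadForm_p : ContDiffOn ℝ ∞ (quadForm p) (slab n U) :=
  contDiffOn_quadForm hD.contDiffOn_p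

theorem fderiv_D_apply {m : Mfd n} (hm : m ∈ slab n U) (X : Mfd n) :
    fderiv ℝ D m X =
      (dirDeriv X (compU D) m, dirDeriv X (compV D) m, fun i => dirDeriv X (compX D i) m) := by
  have hDm := hD.contDiffOn_D.differentiableAt_of_isOpen hD.isOpen_slab hm
  ext
  · exact (dirDeriv_clm_comp (ContinuousLinearMap.fst ℝ ℝ _) hDm X).symm
  · exact (dirDeriv_clm_comp ((ContinuousLinearMap.fst ℝ ℝ _).comp
      (ContinuousLinearMap.snd ℝ ℝ _)) hDm X).symm
  · exact (dirDeriv_clm_comp ((ContinuousLinearMap.proj _).comp <|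
      (ContinuousLinearMap.snd ℝ ℝ _).comp (ContinuousLinearMap.snd ℝ ℝ _)) hDm X).symm

theorem dilation_eq {m : Mfd n} (hm : m ∈ slab n U) (X Y : Mfd n) :
    X.1 * Y.1 * fderiv ℝ (quadForm p) m (D m) + Gb n p m (fderiv ℝ D m X) Y
      + Gb n p m X (fderiv ℝ D m Y) = 2 * Gb n p m X Y := by
  have hGb : (fun m' => Gb n p m' X Y) = fun m' =>
      quadForm p m' * (X.1 * Y.1) + (X.1 * Y.2.1 + Y.1 * X.2.1 - X.2.2 ⬝ᵥ Y.2.2) := by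
    ext m'
    simp only [Gb, quadForm]
    ring
  have h := hD.lieD_eq m hm X Y
  have hQ := hD.contDiffOn_quadForm_p.differentiableAt_of_isOpen hD.isOpen_slab hm
  rw [lieD, hGb, fderiv_add_const, fderiv_mul_const hQ] at h
  simpa [mul_comm] using h

theorem dirDeriv_eV_compU : EqOn (dirDeriv eV (compU D)) 0 (slab n U) := fun m hm => by
  have h := hD.dilation_eq hm eV eV
  simp [Gb_apply, hD.fderiv_D_apply hm] at h
  simp only [Pi.zero_apply]
  linarith

theorem dirDeriv_eX_compU (i : Fin n) :
    EqOn (dirDeriv (eX i) (compU D)) (dirDeriv eV (compX D i)) (slab n U) := fun m hm => by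
  have h := hD.dilation_eq hm eV (eX i)
  simp [Gb_apply, hD.fderiv_D_apply hm] at h
  linarith

theorem dirDeriv_eU_compU_add_dirDeriv_eV_compV :
    EqOn (fun m => dirDeriv eU (compU D) m + dirDeriv eV (compV D) m) (fun _ => 2) (slab n U) :=
  fun m hm => by
  have h := hD.dilation_eq hm eU eV
  simp [Gb_apply, hD.fderiv_D_apply hm, hD.dirDeriv_eV_compU hm] at h
  linarith

theorem dirDeriv_eX_compX_add (i j : Fin n) :
    EqOn (fun m => dirDeriv (eX j) (compX D i) m + dirDeriv (eX i) (compX D j) m)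
      (fun _ => if i = j then 2 else 0) (slab n U) := fun m hm => by
  have h := hD.dilation_eq hm (eX i) (eX j)
  simp [Gb_apply, hD.fderiv_D_apply hm, Pi.single_apply] at h
  by_cases hij : i = j
  · subst hij
    simp only [↓reduceIte] at h ⊢
    linarith
  · simp only [hij, Ne.symm hij, ↓reduceIte, neg_zero] at h ⊢
    linarith

theorem dirDeriv_eU_compX (i : Fin n) :
    EqOn (dirDeriv eU (compX D i))
      (fun m => dirDeriv (eX i) (compV D) m + quadForm p m * dirDeriv (eX i) (compU D) m)
      (slab n U) :=
  fun m hm => by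
  have h := hD.dilation_eq hm eU (eX i)
  simp [Gb_apply, hD.fderiv_D_apply hm] at h
  linarith

theorem dilation_eq_eU_eU :
    EqOn (fun m => compU D m * quadForm (deriv p) m
        + ∑ i, compX D i m * dirDeriv (eX i) (quadForm p) m
        + 2 * dirDeriv eU (compV D) m + 2 * (quadForm p m * dirDeriv eU (compU D) m))
      (fun m => 2 * quadForm p m) (slab n U) := fun m hm => by
  have h := hD.dilation_eq hm eU eU
  rw [fderiv_apply_eq_sum, dirDeriv_eU_quadForm hD.isOpen hD.contDiffOn_p hm,
    dirDeriv_eV_quadForm hD.isOpen hD.contDiffOn_p hm] at h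
  simp [Gb_apply, hD.fderiv_D_apply hm] at h
  simp only [compU, compX]
  linarith

theorem dirDeriv_eV_dirDeriv_compU (X : Mfd n) :
    EqOn (dirDeriv eV (dirDeriv X (compU D))) 0 (slab n U) := fun m hm => by
  rw [dirDeriv_comm hD.isOpen_slab hD.contDiffOn_compU X eV hm]
  exact dirDeriv_eqOn_zero_of_eqOn_const hD.isOpen_slab (c := 0) hD.dirDeriv_eV_compU X hm

theorem dirDeriv_eX_dirDeriv_eX_compU (i j : Fin n) :
    EqOn (dirDeriv (eX j) (dirDeriv (eX i) (compU D))) 0 (slab n U) := fun m hm => by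
  have hΩ := hD.isOpen_slab
  have hst : ∀ k l, dirDeriv (eX l) (dirDeriv (eX k) (compU D)) m
      = dirDeriv eV (dirDeriv (eX l) (compX D k)) m := fun k l => by
    rw [dirDeriv_congr hΩ (hD.dirDeriv_eX_compU k) _ hm,
      dirDeriv_comm hΩ (hD.contDiffOn_compX k) _ _ hm]
  have hskew := dirDeriv_eq_neg_of_add_eqOn_const hΩ ((hD.contDiffOn_compX i).dirDeriv hΩ _)
    ((hD.contDiffOn_compX j).dirDeriv hΩ _) (hD.dirDeriv_eX_compX_add i j) (X := eV) hm
  have hsymm := dirDeriv_comm hΩ hD.contDiffOn_compU (eX i) (eX j) hm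
  simp only [Pi.zero_apply]
  -- `∂ⱼ∂ᵢA = ∂ᵥ∂ⱼWⁱ` is symmetric in `i, j`, but skew by the `(x, x)`-equations
  linarith [hst i j, hst j i]

theorem dirDeriv_eU_dirDeriv_eX_compU (i : Fin n) :
    EqOn (dirDeriv eU (dirDeriv (eX i) (compU D))) 0 (slab n U) := fun m hm => by
  have hΩ := hD.isOpen_slab
  have hA := hD.contDiffOn_compU
  have hQ := hD.contDiffOn_quadForm_p
  -- `∂ᵤ∂ᵢA = -∂ᵢ∂ᵥB = -∂ᵥ(∂ᵤWⁱ - Q ∂ᵢA) = -∂ᵤ∂ᵥWⁱ = -∂ᵤ∂ᵢA`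
  have h1 : dirDeriv eV (dirDeriv eU (compX D i)) m
      = dirDeriv eV (dirDeriv (eX i) (compV D)) m := by
    simp only [dirDeriv_congr hΩ (hD.dirDeriv_eU_compX i) _ hm,
      dirDeriv_add hΩ (hD.contDiffOn_compV.dirDeriv hΩ _) (hQ.mul (hA.dirDeriv hΩ _)) hm,
      dirDeriv_mul hΩ hQ (hA.dirDeriv hΩ _) hm, dirDeriv_eV_quadForm hD.isOpen hD.contDiffOn_p hm,
      hD.dirDeriv_eV_dirDeriv_compU _ hm]
    simp
  have h2 : dirDeriv eV (dirDeriv eU (compX D i)) m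
      = dirDeriv eU (dirDeriv (eX i) (compU D)) m := by
    rw [← dirDeriv_comm hΩ (hD.contDiffOn_compX i) _ _ hm,
      dirDeriv_congr hΩ (hD.dirDeriv_eX_compU i) _ hm]
  have h3 := dirDeriv_comm hΩ hA (eX i) eU hm
  have h4 := dirDeriv_eq_neg_of_add_eqOn_const hΩ (hA.dirDeriv hΩ _)
    (hD.contDiffOn_compV.dirDeriv hΩ _) hD.dirDeriv_eU_compU_add_dirDeriv_eV_compV (X := eX i) hm
  have h5 := dirDeriv_comm hΩ hD.contDiffOn_compV eV (eX i) hm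
  simp only [Pi.zero_apply]
  linarith

end IsDilation

structure IsPinnedDilation (U : Set ℝ) (u₀ : ℝ) (p : ℝ → Matrix (Fin n) (Fin n) ℝ)
    (D : Mfd n → Mfd n) : Prop extends IsDilation U p D where
  convex : Convex ℝ U
  mem : u₀ ∈ U
  vanish : ∀ v : ℝ, D (u₀, v, 0) = 0

namespace IsPinnedDilation

variable {u₀ : ℝ} (hD : IsPinnedDilation U u₀ p D)
include hD

theorem base_mem : ((u₀, 0, 0) : Mfd n) ∈ slab n U := hD.mem

theorem fderiv_D_base_eV : fderiv ℝ D (u₀, 0, 0) eV = 0 :=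
  fderiv_apply_eq_of_forall_add_smul
    (hD.contDiffOn_D.differentiableAt_of_isOpen hD.isOpen_slab hD.base_mem) fun t => by
      simp [eV, hD.vanish]

theorem eqOn_base_of_dirDeriv_eq_zero {f : Mfd n → ℝ} (hf : ContDiffOn ℝ ∞ f (slab n U))
    (hU : EqOn (dirDeriv eU f) 0 (slab n U)) (hV : EqOn (dirDeriv eV f) 0 (slab n U))
    (hX : ∀ i, EqOn (dirDeriv (eX i) f) 0 (slab n U)) :
    EqOn f (fun _ => f (u₀, 0, 0)) (slab n U) := fun _ hm =>
  Mfd.eq_of_dirDeriv_eq_zero hD.isOpen_slab (convex_slab hD.convex) hf hU hV hX hm hD.base_mem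

theorem dirDeriv_eX_compU_eq_zero (i : Fin n) :
    EqOn (dirDeriv (eX i) (compU D)) 0 (slab n U) := fun m hm => by
  have hbase : dirDeriv (eX i) (compU D) (u₀, 0, 0) = 0 := by
    rw [hD.dirDeriv_eX_compU i hD.base_mem]
    simpa [hD.fderiv_D_apply hD.base_mem] using congrArg (fun Z => Z.2.2 i) hD.fderiv_D_base_eV
  simpa [hbase] using
    hD.eqOn_base_of_dirDeriv_eq_zero (hD.contDiffOn_compU.dirDeriv hD.isOpen_slab _)
    (hD.dirDeriv_eU_dirDeriv_eX_compU i) (hD.dirDeriv_eV_dirDeriv_compU _)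
    (fun j => hD.dirDeriv_eX_dirDeriv_eX_compU i j) hm

theorem dirDeriv_eV_compX_eq_zero (i : Fin n) : EqOn (dirDeriv eV (compX D i)) 0 (slab n U) :=
  fun _ hm => (hD.dirDeriv_eX_compU i hm).symm.trans (hD.dirDeriv_eX_compU_eq_zero i hm)

theorem dirDeriv_eU_dirDeriv_eU_compU :
    EqOn (dirDeriv eU (dirDeriv eU (compU D))) 0 (slab n U) := fun m hm => by
  have hΩ := hD.isOpen_slab
  have hA := hD.contDiffOn_compU
  have hB := hD.contDiffOn_compV
  have hW := hD.contDiffOn_compX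
  have hQ := hD.contDiffOn_quadForm_p
  have hQ' : ContDiffOn ℝ ∞ (quadForm (deriv p)) (slab n U) :=
    contDiffOn_quadForm hD.contDiffOn_deriv_p
  have h := dirDeriv_congr hΩ hD.dilation_eq_eU_eU eV hm
  have hBUV : dirDeriv eV (dirDeriv eU (compV D)) m = -dirDeriv eU (dirDeriv eU (compU D)) m := by
    rw [dirDeriv_comm hΩ hB eU eV hm, dirDeriv_eq_neg_of_add_eqOn_const hΩ (hA.dirDeriv hΩ _)
      (hB.dirDeriv hΩ _) hD.dirDeriv_eU_compU_add_dirDeriv_eV_compV hm, neg_neg]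
  -- in the `v`-derivative of the `(u, u)`-equation only `2 ∂ᵥ∂ᵤB = -2 ∂ᵤ∂ᵤA` survives
  simp (disch := first | assumption | fun_prop (disch := assumption)) only [dirDeriv_add hΩ,
    dirDeriv_mul hΩ, dirDeriv_sum hΩ] at h
  simpa [hD.dirDeriv_eV_compU hm, hD.dirDeriv_eV_compX_eq_zero _ hm,
    hD.dirDeriv_eV_dirDeriv_compU _ hm, dirDeriv_eV_quadForm hD.isOpen hD.contDiffOn_p hm,
    dirDeriv_eV_quadForm hD.isOpen hD.contDiffOn_deriv_p hm,
    dirDeriv_eV_dirDeriv_quadForm hD.isOpen hD.contDiffOn_p _ hm, hBUV] using h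

theorem dirDeriv_eU_compU_eq_two : EqOn (dirDeriv eU (compU D)) (fun _ => 2) (slab n U) :=
  fun m hm => by
  have hΩ := hD.isOpen_slab
  have hA := hD.contDiffOn_compU
  have hbase : dirDeriv eU (compU D) (u₀, 0, 0) = 2 := by
    have hB : dirDeriv eV (compV D) (u₀, 0, 0) = 0 := by
      simpa [hD.fderiv_D_apply hD.base_mem] using congrArg (fun Z => Z.2.1) hD.fderiv_D_base_eV
    simpa [hB] using hD.dirDeriv_eU_compU_add_dirDeriv_eV_compV hD.base_mem
  have hX (i : Fin n) : EqOn (dirDeriv (eX i) (dirDeriv eU (compU D))) 0 (slab n U) :=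
    fun m hm => by
    rw [dirDeriv_comm hΩ hA eU (eX i) hm]
    exact dirDeriv_eqOn_zero_of_eqOn_const hΩ (c := 0) (hD.dirDeriv_eX_compU_eq_zero i) eU hm
  simpa [hbase] using hD.eqOn_base_of_dirDeriv_eq_zero (hA.dirDeriv hΩ eU)
    hD.dirDeriv_eU_dirDeriv_eU_compU (hD.dirDeriv_eV_dirDeriv_compU eU) hX hm

theorem compU_eq : EqOn (compU D) (fun m => 2 * (m.1 - u₀)) (slab n U) := fun m hm => by
  have hΩ := hD.isOpen_slab
  have hA := hD.contDiffOn_compU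
  have haff : ContDiffOn ℝ ∞ (fun m : Mfd n => 2 * (m.1 - u₀)) (slab n U) := by fun_prop
  have hd (X : Mfd n) : EqOn (dirDeriv X (fun m => compU D m - 2 * (m.1 - u₀)))
      (fun m => dirDeriv X (compU D) m - 2 * X.1) (slab n U) := fun m hm => by
    rw [dirDeriv_sub hΩ hA haff hm,
      dirDeriv_comp_fst (c := fun u => 2 * (u - u₀)) (by fun_prop)]
    simp [mul_comm]
  have hbase : compU D (u₀, 0, 0) = 0 := by simp [compU, hD.vanish]
  have := hD.eqOn_base_of_dirDeriv_eq_zero (hA.sub haff)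
    (fun m hm => by simp [hd eU hm, hD.dirDeriv_eU_compU_eq_two hm])
    (fun m hm => by simp [hd eV hm, hD.dirDeriv_eV_compU hm])
    (fun i m hm => by simp [hd (eX i) hm, hD.dirDeriv_eX_compU_eq_zero i hm]) hm
  simp only [hbase] at this
  linarith

theorem dirDeriv_eU_compX_eq (i : Fin n) :
    EqOn (dirDeriv eU (compX D i)) (dirDeriv (eX i) (compV D)) (slab n U) := fun m hm => by
  simpa [hD.dirDeriv_eX_compU_eq_zero i hm] using hD.dirDeriv_eU_compX i hm

theorem dirDeriv_eU_dirDeriv_eX_compX (i j : Fin n) :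
    EqOn (dirDeriv eU (dirDeriv (eX j) (compX D i))) 0 (slab n U) := fun m hm => by
  have hΩ := hD.isOpen_slab
  have hW := hD.contDiffOn_compX
  have hr : ∀ i j, dirDeriv eU (dirDeriv (eX j) (compX D i)) m
      = dirDeriv (eX j) (dirDeriv (eX i) (compV D)) m := fun i j => by
    rw [dirDeriv_comm hΩ (hW i) _ _ hm, dirDeriv_congr hΩ (hD.dirDeriv_eU_compX_eq i) _ hm]
  have hskew := dirDeriv_eq_neg_of_add_eqOn_const hΩ ((hW i).dirDeriv hΩ _)
    ((hW j).dirDeriv hΩ _) (hD.dirDeriv_eX_compX_add i j) (X := eU) hm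
  have hsymm := dirDeriv_comm hΩ hD.contDiffOn_compV (eX i) (eX j) hm
  simp only [Pi.zero_apply]
  -- `∂ᵤ∂ⱼWⁱ = ∂ⱼ∂ᵢB` is symmetric in `i, j`, but skew by the `(x, x)`-equations
  linarith [hr i j, hr j i]

theorem dirDeriv_eX_dirDeriv_eX_compX (i j k : Fin n) :
    EqOn (dirDeriv (eX k) (dirDeriv (eX j) (compX D i))) 0 (slab n U) := fun m hm => by
  have hΩ := hD.isOpen_slab
  have hW := hD.contDiffOn_compX
  have hsymm : ∀ i j k, dirDeriv (eX k) (dirDeriv (eX j) (compX D i)) m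
      = dirDeriv (eX j) (dirDeriv (eX k) (compX D i)) m := fun i j k =>
    dirDeriv_comm hΩ (hW i) (eX j) (eX k) hm
  have hskew : ∀ i j k, dirDeriv (eX k) (dirDeriv (eX j) (compX D i)) m
      = -dirDeriv (eX k) (dirDeriv (eX i) (compX D j)) m := fun i j k =>
    dirDeriv_eq_neg_of_add_eqOn_const hΩ ((hW i).dirDeriv hΩ _) ((hW j).dirDeriv hΩ _)
      (hD.dirDeriv_eX_compX_add i j) hm
  simp only [Pi.zero_apply]
  -- a 3-tensor symmetric in its last two indices and skew in its first two vanishes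
  linarith [hskew i j k, hsymm j i k, hskew j k i, hsymm k j i, hskew k i j, hsymm i k j]

theorem dirDeriv_eX_compX_eq_base (i j : Fin n) :
    EqOn (dirDeriv (eX j) (compX D i)) (fun _ => dirDeriv (eX j) (compX D i) (u₀, 0, 0))
      (slab n U) := by
  have hΩ := hD.isOpen_slab
  refine hD.eqOn_base_of_dirDeriv_eq_zero ((hD.contDiffOn_compX i).dirDeriv hΩ _)
    (hD.dirDeriv_eU_dirDeriv_eX_compX i j) (fun m hm => ?_)
    (fun k => hD.dirDeriv_eX_dirDeriv_eX_compX i j k)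
  rw [dirDeriv_comm hΩ (hD.contDiffOn_compX i) _ _ hm]
  exact dirDeriv_eqOn_zero_of_eqOn_const hΩ (c := 0) (hD.dirDeriv_eV_compX_eq_zero i) _ hm

theorem dirDeriv_eX_dirDeriv_eX_dirDeriv_eU_compV (k l : Fin n) :
    EqOn (dirDeriv (eX l) (dirDeriv (eX k) (dirDeriv eU (compV D)))) 0 (slab n U) :=
  fun m hm => by
  have hΩ := hD.isOpen_slab
  have hW := hD.contDiffOn_compX k
  have h1 : EqOn (dirDeriv (eX k) (dirDeriv eU (compV D))) (dirDeriv eU (dirDeriv eU (compX D k)))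
      (slab n U) := fun m hm => by
    rw [dirDeriv_comm hΩ hD.contDiffOn_compV _ _ hm,
      dirDeriv_congr hΩ (hD.dirDeriv_eU_compX_eq k) _ hm]
  have h2 : EqOn (dirDeriv (eX l) (dirDeriv eU (compX D k))) 0 (slab n U) := fun m hm => by
    rw [dirDeriv_comm hΩ hW _ _ hm]
    exact hD.dirDeriv_eU_dirDeriv_eX_compX k l hm
  rw [dirDeriv_congr hΩ h1 _ hm, dirDeriv_comm hΩ (hW.dirDeriv hΩ _) _ _ hm]
  exact dirDeriv_eqOn_zero_of_eqOn_const hΩ (c := 0) h2 _ hm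

theorem xJacobian_add_transpose : xJacobian D (u₀, 0, 0) + (xJacobian D (u₀, 0, 0))ᵀ = 2 := by
  ext i j
  have h := hD.dirDeriv_eX_compX_add i j hD.base_mem
  simpa [xJacobian, Matrix.ofNat_apply] using h

theorem dilation_eq_eU_eU_reduced :
    EqOn (fun m => compU D m * quadForm (deriv p) m
        + ∑ i, compX D i m * dirDeriv (eX i) (quadForm p) m
        + 2 * dirDeriv eU (compV D) m + 2 * quadForm p m) (fun _ => 0) (slab n U) := fun m hm => by
  have h := hD.dilation_eq_eU_eU hm
  simp only [hD.dirDeriv_eU_compU_eq_two hm] at h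
  simp only
  linarith

theorem dirDeriv_eX_dilation_eq_eU_eU_reduced (k : Fin n) :
    EqOn (fun m => compU D m * dirDeriv (eX k) (quadForm (deriv p)) m
        + ∑ i, (dirDeriv (eX k) (compX D i) m * dirDeriv (eX i) (quadForm p) m
          + compX D i m * dirDeriv (eX k) (dirDeriv (eX i) (quadForm p)) m)
        + 2 * dirDeriv (eX k) (dirDeriv eU (compV D)) m + 2 * dirDeriv (eX k) (quadForm p) m)
      (fun _ => 0) (slab n U) := fun m hm => by
  have hΩ := hD.isOpen_slab
  have hA := hD.contDiffOn_compU
  have hB := hD.contDiffOn_compV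
  have hW := hD.contDiffOn_compX
  have hQ := hD.contDiffOn_quadForm_p
  have hQ' : ContDiffOn ℝ ∞ (quadForm (deriv p)) (slab n U) :=
    contDiffOn_quadForm hD.contDiffOn_deriv_p
  have h := dirDeriv_eqOn_zero_of_eqOn_const hΩ hD.dilation_eq_eU_eU_reduced (eX k) hm
  simp (disch := first | assumption | fun_prop (disch := assumption)) only [dirDeriv_add hΩ,
    dirDeriv_mul hΩ, dirDeriv_sum hΩ] at h
  simpa [hD.dirDeriv_eX_compU_eq_zero k hm] using h

theorem smul_deriv_add_eq_zero_on_axis {u : ℝ} (hu : u ∈ U) :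
    (2 * (u - u₀)) • (deriv p u + (deriv p u)ᵀ) + (xJacobian D (u₀, 0, 0))ᵀ * (p u + (p u)ᵀ)
      + (p u + (p u)ᵀ) * xJacobian D (u₀, 0, 0) + (2 : ℝ) • (p u + (p u)ᵀ) = 0 := by
  have hΩ := hD.isOpen_slab
  have hA := hD.contDiffOn_compU
  have hB := hD.contDiffOn_compV
  have hW := hD.contDiffOn_compX
  have hQ := hD.contDiffOn_quadForm_p
  have hQ' : ContDiffOn ℝ ∞ (quadForm (deriv p)) (slab n U) :=
    contDiffOn_quadForm hD.contDiffOn_deriv_p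
  have hm : ((u, 0, 0) : Mfd n) ∈ slab n U := hu
  ext k l
  have h :=
    dirDeriv_eqOn_zero_of_eqOn_const hΩ (hD.dirDeriv_eX_dilation_eq_eU_eU_reduced k) (eX l) hm
  simp (disch := first | assumption | fun_prop (disch := assumption)) only [dirDeriv_add hΩ,
    dirDeriv_mul hΩ, dirDeriv_sum hΩ] at h
  have hN (i j : Fin n) : dirDeriv (eX j) (compX D i) (u, 0, 0) = xJacobian D (u₀, 0, 0) i j :=
    hD.dirDeriv_eX_compX_eq_base i j hm
  simp only [hD.dirDeriv_eX_compU_eq_zero l hm, hD.compU_eq hm, hN,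
    hD.dirDeriv_eX_dirDeriv_eX_compX _ _ _ hm, hD.dirDeriv_eX_dirDeriv_eX_dirDeriv_eU_compV _ _ hm,
    dirDeriv_eX_quadForm hD.isOpen hD.contDiffOn_p _ hm,
    dirDeriv_eX_dirDeriv_eX_quadForm hD.isOpen hD.contDiffOn_p _ _ hm,
    dirDeriv_eX_dirDeriv_eX_quadForm hD.isOpen hD.contDiffOn_deriv_p _ _ hm,
    dirDeriv_eX_dirDeriv_eX_dirDeriv_eX_quadForm hD.isOpen hD.contDiffOn_p _ _ _ hm,
    dirDeriv_const, Pi.zero_apply, zero_mul, mul_zero, zero_add, add_zero, Finset.sum_const_zero,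
    Finset.sum_add_distrib] at h
  simp only [smul_add, Matrix.add_apply, Matrix.smul_apply, smul_eq_mul, transpose_apply,
    Matrix.mul_apply, Matrix.zero_apply]
  have hcomm : ∑ j, (p u k j + p u j k) * xJacobian D (u₀, 0, 0) j l
      = ∑ j, xJacobian D (u₀, 0, 0) j l * (p u j k + p u k j) :=
    Finset.sum_congr rfl fun j _ => by ring
  linear_combination h + hcomm

theorem sub_mul_trace_eq (hsymm : ∀ u ∈ U, (p u)ᵀ = p u) {u : ℝ} (hu : u ∈ U) :
    (u - u₀) * (2 * trace (p u * deriv p u)) = -(4 : ℕ) * trace (p u * p u) := by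
  have h := trace_mul_eq_of_add_transpose_eq_two hD.xJacobian_add_transpose
    (hD.smul_deriv_add_eq_zero_on_axis hu)
  have hT : trace (p u * (deriv p u)ᵀ) = trace (p u * deriv p u) := by
    rw [← trace_transpose, transpose_mul, transpose_transpose, hsymm u hu, trace_mul_comm]
  simp only [hsymm u hu, Matrix.add_mul, Matrix.mul_add, trace_add, hT] at h
  push_cast
  linear_combination h / 4

theorem eq_zero (hsymm : ∀ u ∈ U, (p u)ᵀ = p u) {u : ℝ} (hu : u ∈ U) : p u = 0 := by
  have htr := eqOn_zero_of_sub_mul_deriv_eq hD.convex hD.mem four_ne_zero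
    (fun u hu => hasDerivAt_trace_mul_self
      (hD.contDiffOn_p.differentiableAt_of_isOpen hD.isOpen hu).hasDerivAt)
    (fun u hu => hD.sub_mul_trace_eq hsymm hu) hu
  rw [← trace_mul_conjTranspose_self_eq_zero_iff, conjTranspose_eq_transpose_of_trivial,
    hsymm u hu]
  exact htr

end IsPinnedDilation

theorem stmt7_general (n : ℕ)
    (U : Set ℝ) (hUopen : IsOpen U) (hUconv : Convex ℝ U)
    (u₀ : ℝ) (hu₀ : u₀ ∈ U)
    (p : ℝ → Matrix (Fin n) (Fin n) ℝ)
    (hpsmooth : ContDiffOn ℝ (⊤ : ℕ∞) p U)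
    (hpsymm : ∀ u ∈ U, (p u)ᵀ = p u)
    (D : Mfd n → Mfd n)
    (hDsmooth : ContDiffOn ℝ (⊤ : ℕ∞) D {m : Mfd n | m.1 ∈ U})
    (hdilation : ∀ m ∈ {m : Mfd n | m.1 ∈ U}, ∀ X Y,
      lieD n D (Gb n p) m X Y = 2 * Gb n p m X Y)
    (hvanish : ∀ v : ℝ, D (u₀, v, 0) = 0) :
    ∀ u ∈ U, p u = 0 := by
  have hD : IsPinnedDilation U u₀ p D :=
    { isOpen := hUopen, contDiffOn_p := hpsmooth, contDiffOn_D := hDsmooth,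
      lieD_eq := hdilation, convex := hUconv, mem := hu₀, vanish := hvanish }
  exact fun u hu => hD.eq_zero hpsymm hu

/-- if a Brinkmann plane wave (with `n ≥ 2`) admits an infinitesimal dilation
(`ℒ_D G = 2G`) vanishing along the null geodesic `{u = u₀, x = 0}`, then `p ≡ 0`, i.e.
the metric is the flat metric `2 du dv − dxᵀdx`. -/
theorem stmt7 (n : ℕ) (hn : 2 ≤ n)
    (U : Set ℝ) (hUopen : IsOpen U) (hUconv : Convex ℝ U) (hUne : U.Nonempty)
    (u₀ : ℝ) (hu₀ : u₀ ∈ U)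
    (p : ℝ → Matrix (Fin n) (Fin n) ℝ)
    (hpsmooth : ContDiffOn ℝ (⊤ : ℕ∞) p U)
    (hpsymm : ∀ u ∈ U, (p u)ᵀ = p u)
    (D : Mfd n → Mfd n)
    (hDsmooth : ContDiffOn ℝ (⊤ : ℕ∞) D {m : Mfd n | m.1 ∈ U})
    (hdilation : ∀ m ∈ {m : Mfd n | m.1 ∈ U}, ∀ X Y,
      lieD n D (Gb n p) m X Y = 2 * Gb n p m X Y)
    (hvanish : ∀ v : ℝ, D (u₀, v, 0) = 0) :
    ∀ u ∈ U, p u = 0 :=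
  stmt7_general n U hUopen hUconv u₀ hu₀ p hpsmooth hpsymm D hDsmooth hdilation hvanish
end
end

section
/- For each a ∈ [0,1), the function g_a : ℝ → ℝ is well defined and smooth (C^∞) on all of ℝ, satisfies 1 ≤ g_a(u) ≤ 2 for all u, and g_a(u) > 1 exactly when u ∈ (0,1). Consequently, for every α : ℤ → [0,1), at each u ∈ ℝ at most one factor g_{α(n)}(u−n) differs from 1, the function p_α(u) = −1 + ∏_{n∈ℤ} g_{α(n)}(u−n) is well defined and smooth on ℝ, takes values in the interval [0,1], and satisfies p_α(u) = 0 if and only if u ∈ ℤ. -/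
noncomputable section

/-- `f_a(u) = a/(u(1−u)) + (1−a)/(u²(1−u))`. -/
def fFn (a u : ℝ) : ℝ := a / (u * (1 - u)) + (1 - a) / (u ^ 2 * (1 - u))

/-- `g_a(u) = 1 + e^{4 − f_a(u)}` for `u ∈ (0,1)`, and `g_a(u) = 1` otherwise. -/
def gFn (a u : ℝ) : ℝ :=
  if u ∈ Set.Ioo (0 : ℝ) 1 then 1 + Real.exp (4 - fFn a u) else 1

/-- `p_α(u) = −1 + ∏_{n ∈ ℤ} g_{α(n)}(u − n)`. -/
def pFn (α : ℤ → ℝ) (u : ℝ) : ℝ := -1 + ∏' n : ℤ, gFn (α n) (u - (n : ℝ))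

lemma gFn_eq {a : ℝ} (ha : a ∈ Set.Ico (0 : ℝ) 1) (u : ℝ) :
    gFn a u = 1 + Real.exp 4 *
      (expNegInvGlue (u * (1 - u)) * expNegInvGlue (u ^ 2 / (1 - a))) := by
  obtain ⟨ha0, ha1⟩ := ha
  have h1a : (0:ℝ) < 1 - a := by linarith
  unfold gFn
  split_ifs with h
  · obtain ⟨hu0, hu1⟩ := h
    have hx : (0:ℝ) < u * (1 - u) := by nlinarith
    have hy : (0:ℝ) < u ^ 2 / (1 - a) := by positivity
    rw [show expNegInvGlue (u * (1 - u)) = Real.exp (-(u * (1 - u))⁻¹) by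
        simp [expNegInvGlue, not_le.2 hx],
      show expNegInvGlue (u ^ 2 / (1 - a)) = Real.exp (-(u ^ 2 / (1 - a))⁻¹) by
        simp [expNegInvGlue, not_le.2 hy],
      ← Real.exp_add, ← Real.exp_add]
    congr 2
    have hu : u ≠ 0 := ne_of_gt hu0
    have hu1' : (1:ℝ) - u ≠ 0 := by linarith
    have h1a' : (1:ℝ) - a ≠ 0 := ne_of_gt h1a
    unfold fFn
    field_simp
    ring
  · have hx : u * (1 - u) ≤ 0 := by
      rw [Set.mem_Ioo] at h
      push_neg at h
      rcases le_or_gt u 0 with h0 | h0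
      · nlinarith
      · nlinarith [h h0]
    rw [expNegInvGlue.zero_of_nonpos hx]
    ring

lemma gFn_contDiff {a : ℝ} (ha : a ∈ Set.Ico (0 : ℝ) 1) : ContDiff ℝ (⊤ : ℕ∞) (gFn a) := by
  have : gFn a = fun u => 1 + Real.exp 4 *
      (expNegInvGlue (u * (1 - u)) * expNegInvGlue (u ^ 2 / (1 - a))) :=
    funext (gFn_eq ha)
  rw [this]
  refine contDiff_const.add (contDiff_const.mul (ContDiff.mul ?_ ?_))
  · exact expNegInvGlue.contDiff.comp (contDiff_id.mul (contDiff_const.sub contDiff_id))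
  · exact expNegInvGlue.contDiff.comp ((contDiff_id.pow 2).div_const (1 - a))

lemma gFn_mem {a : ℝ} (ha : a ∈ Set.Ico (0 : ℝ) 1) (u : ℝ) : gFn a u ∈ Set.Icc (1 : ℝ) 2 := by
  obtain ⟨ha0, ha1⟩ := ha
  unfold gFn
  split_ifs with h
  · obtain ⟨hu0, hu1⟩ := h
    have hx : (0:ℝ) < u * (1 - u) := by nlinarith
    have hy : (0:ℝ) < u ^ 2 * (1 - u) := by nlinarith
    constructor
    · nlinarith [Real.exp_pos (4 - fFn a u)]
    · have h1 : 4 * a ≤ a / (u * (1 - u)) := by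
        rw [le_div_iff₀ hx]
        nlinarith [mul_nonneg ha0 (sq_nonneg (2 * u - 1))]
      have h2 : 4 * (1 - a) ≤ (1 - a) / (u ^ 2 * (1 - u)) := by
        rw [le_div_iff₀ hy]
        nlinarith [mul_nonneg (by linarith : (0:ℝ) ≤ 1 - a) (sq_nonneg (2 * u - 1)),
          mul_nonneg (mul_nonneg (by linarith : (0:ℝ) ≤ 1 - a) hu0.le) (sq_nonneg (1 - u))]
      have hf : 4 ≤ fFn a u := by unfold fFn; linarith
      have : Real.exp (4 - fFn a u) ≤ 1 := by
        rw [← Real.exp_zero]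
        exact Real.exp_le_exp.mpr (by linarith)
      linarith
  · norm_num

lemma gFn_gt_one_iff (a u : ℝ) : 1 < gFn a u ↔ u ∈ Set.Ioo (0 : ℝ) 1 := by
  unfold gFn
  split_ifs with h
  · simp only [iff_true, h]
    linarith [Real.exp_pos (4 - fFn a u)]
  · simp [h]

lemma gFn_ne_one {a u : ℝ} (h : gFn a u ≠ 1) : u ∈ Set.Ioo (0 : ℝ) 1 := by
  by_contra hc
  exact h (by unfold gFn; rw [if_neg hc])

lemma gFn_floor {α : ℤ → ℝ} {u : ℝ} {n : ℤ} (h : gFn (α n) (u - (n : ℝ)) ≠ 1) :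
    n = ⌊u⌋ := by
  obtain ⟨h1, h2⟩ := gFn_ne_one h
  symm
  rw [Int.floor_eq_iff]
  constructor
  · linarith
  · linarith

/-- for `a ∈ [0,1)` the function `g_a` is well defined and smooth on `ℝ`,
takes values in `[1,2]`, and exceeds `1` exactly on `(0,1)`; consequently, for
`α : ℤ → [0,1)`, at each `u` at most one factor `g_{α(n)}(u−n)` differs from `1`, the
product defining `p_α` is well defined, `p_α` is smooth, takes values in `[0,1]`, and
vanishes exactly at the integers. -/
theorem stmt8 :
    (∀ a ∈ Set.Ico (0 : ℝ) 1,
      ContDiff ℝ (⊤ : ℕ∞) (gFn a) ∧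
      (∀ u : ℝ, gFn a u ∈ Set.Icc (1 : ℝ) 2) ∧
      (∀ u : ℝ, 1 < gFn a u ↔ u ∈ Set.Ioo (0 : ℝ) 1)) ∧
    (∀ α : ℤ → ℝ, (∀ n : ℤ, α n ∈ Set.Ico (0 : ℝ) 1) →
      (∀ u : ℝ, ∀ m k : ℤ,
        gFn (α m) (u - (m : ℝ)) ≠ 1 → gFn (α k) (u - (k : ℝ)) ≠ 1 → m = k) ∧
      (∀ u : ℝ, Multipliable fun n : ℤ => gFn (α n) (u - (n : ℝ))) ∧
      ContDiff ℝ (⊤ : ℕ∞) (pFn α) ∧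
      (∀ u : ℝ, pFn α u ∈ Set.Icc (0 : ℝ) 1) ∧
      (∀ u : ℝ, pFn α u = 0 ↔ ∃ k : ℤ, u = (k : ℝ))) := by
  constructor
  · intro a ha
    exact ⟨gFn_contDiff ha, gFn_mem ha, fun u => gFn_gt_one_iff a u⟩
  · intro α hα
    have hp : ∀ u : ℝ, pFn α u = -1 + gFn (α ⌊u⌋) (u - (⌊u⌋ : ℝ)) := by
      intro u
      unfold pFn
      rw [tprod_eq_mulSingle ⌊u⌋ (fun b hb => by
        by_contra h
        exact hb (gFn_floor h))]
    refine ⟨?_, ?_, ?_, ?_, ?_⟩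
    · intro u m k hm hk
      rw [gFn_floor hm, gFn_floor hk]
    · intro u
      apply multipliable_of_ne_finset_one (s := {⌊u⌋})
      intro b hb
      by_contra h
      exact hb (by simp [gFn_floor h])
    · rw [contDiff_iff_contDiffAt]
      intro u₀
      set n := ⌊u₀⌋ with hn
      have hF : ContDiff ℝ (⊤ : ℕ∞)
          (fun u => -1 + ∏ m ∈ ({n - 1, n, n + 1} : Finset ℤ), gFn (α m) (u - (m : ℝ))) :=
        contDiff_const.add (contDiff_prod fun m _ =>
          (gFn_contDiff (hα m)).comp (contDiff_id.sub contDiff_const))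
      apply hF.contDiffAt.congr_of_eventuallyEq
      filter_upwards [isOpen_Ioo.mem_nhds (⟨by linarith, by linarith⟩ : u₀ ∈ Set.Ioo (u₀ - 1) (u₀ + 1))]
        with u hu
      unfold pFn
      congr 1
      apply tprod_eq_prod
      intro m hm
      by_contra h
      obtain ⟨h1, h2⟩ := gFn_ne_one h
      have hfl : (n : ℝ) ≤ u₀ := Int.floor_le u₀
      have hfl2 : u₀ < (n : ℝ) + 1 := Int.lt_floor_add_one u₀
      have c1 : m < n + 2 := by
        have : (m : ℝ) < (n : ℝ) + 2 := by
          obtain ⟨hu1, hu2⟩ := hu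
          linarith
        exact_mod_cast this
      have c2 : n - 2 < m := by
        have : (n : ℝ) - 2 < (m : ℝ) := by
          obtain ⟨hu1, hu2⟩ := hu
          linarith
        exact_mod_cast this
      apply hm
      simp only [Finset.mem_insert, Finset.mem_singleton]
      omega
    · intro u
      rw [hp u]
      obtain ⟨h1, h2⟩ := gFn_mem (hα ⌊u⌋) (u - (⌊u⌋ : ℝ))
      exact ⟨by linarith, by linarith⟩
    · intro u
      rw [hp u]
      constructor
      · intro h
        have hg : gFn (α ⌊u⌋) (u - (⌊u⌋ : ℝ)) = 1 := by linarith
        refine ⟨⌊u⌋, ?_⟩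
        by_contra hne
        have hfr : u - (⌊u⌋ : ℝ) ∈ Set.Ioo (0 : ℝ) 1 := by
          constructor
          · rcases lt_or_eq_of_le (Int.floor_le u) with h' | h'
            · linarith
            · exact absurd h'.symm hne
          · linarith [Int.lt_floor_add_one u]
        have := (gFn_gt_one_iff (α ⌊u⌋) (u - (⌊u⌋ : ℝ))).mpr hfr
        linarith
      · rintro ⟨k, rfl⟩
        have : ⌊(k : ℝ)⌋ = k := Int.floor_intCast k
        rw [this, sub_self]
        have : gFn (α k) 0 = 1 := by
          unfold gFn
          rw [if_neg (by simp)]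
        rw [this]
        ring
end
end

section
/- Let a ∈ [0,1) and set b = √(9 − 8a), so b ∈ (1,3]. Then for every u ∈ (0,1) one has f_a(u) ≥ (b+3)³/(8(b+1)), with equality if and only if u = (b+1)/(b+3); moreover this minimum value (b+3)³/(8(b+1)) lies in the interval (4, 27/4], equaling 27/4 when a = 0. In particular f_a(u) > 4 for all u ∈ (0,1), and f_a(u) → ∞ as u → 0⁺ and as u → 1⁻. -/
/-!
Substituting `a = (9 - b²)/8` turns `f_a(u) - (b+3)³/(8(b+1))` into
`((b+3)u - (b+1))² ((b+3)u + b - 1) / (8(b+1) u² (1-u))`, whose numerator is a square times a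
factor that is positive for `b > 1`, `u > 0`. At both ends of `(0,1)` the numerator
`a u + 1 - a` of `f_a` stays positive while the denominator `u²(1-u)` tends to `0⁺`.
-/

noncomputable section

open Filter Set Topology

lemma fFn_eq_div {a u : ℝ} (hu0 : u ≠ 0) (hu1 : 1 - u ≠ 0) :
    fFn a u = (a * u + (1 - a)) / (u ^ 2 * (1 - u)) := by
  unfold fFn
  field_simp

lemma fFn_sub_eq_div {a b u : ℝ} (hab : b ^ 2 = 9 - 8 * a) (hb : b + 1 ≠ 0)
    (hu0 : u ≠ 0) (hu1 : 1 - u ≠ 0) :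
    fFn a u - (b + 3) ^ 3 / (8 * (b + 1)) =
      ((b + 3) * u - (b + 1)) ^ 2 * ((b + 3) * u + (b - 1)) / (8 * (b + 1) * (u ^ 2 * (1 - u))) := by
  obtain rfl : a = (9 - b ^ 2) / 8 := by linarith
  rw [fFn_eq_div hu0 hu1]
  field_simp
  ring

section Minimum

variable {a b u : ℝ}

lemma cube_div_le_fFn (hab : b ^ 2 = 9 - 8 * a) (hb : 1 < b) (hu : u ∈ Ioo 0 1) :
    (b + 3) ^ 3 / (8 * (b + 1)) ≤ fFn a u := by
  obtain ⟨hu0, hu1⟩ := hu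
  rw [← sub_nonneg, fFn_sub_eq_div hab (by linarith) hu0.ne' (by linarith)]
  have hden : 0 < 8 * (b + 1) * (u ^ 2 * (1 - u)) := by
    have : 0 < 1 - u := by linarith
    positivity
  exact div_nonneg (mul_nonneg (sq_nonneg _) (by nlinarith)) hden.le

lemma fFn_eq_cube_div_iff (hab : b ^ 2 = 9 - 8 * a) (hb : 1 < b) (hu : u ∈ Ioo 0 1) :
    fFn a u = (b + 3) ^ 3 / (8 * (b + 1)) ↔ u = (b + 1) / (b + 3) := by
  obtain ⟨hu0, hu1⟩ := hu
  have hfac : (b + 3) * u + (b - 1) ≠ 0 := by nlinarith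
  have hden : 8 * (b + 1) * (u ^ 2 * (1 - u)) ≠ 0 := by
    have : 1 - u ≠ 0 := by linarith
    have : b + 1 ≠ 0 := by linarith
    positivity
  rw [← sub_eq_zero, fFn_sub_eq_div hab (by linarith) hu0.ne' (by linarith),
    div_eq_zero_iff, or_iff_left hden, mul_eq_zero, or_iff_left hfac, sq_eq_zero_iff,
    sub_eq_zero, eq_div_iff (by linarith), mul_comm]

lemma four_lt_cube_div (hb : 1 < b) : 4 < (b + 3) ^ 3 / (8 * (b + 1)) := by
  rw [lt_div_iff₀ (by linarith)]
  nlinarith [mul_pos (sub_pos.2 hb) (show 0 < b ^ 2 + 10 * b + 5 by nlinarith)]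

lemma cube_div_le_27_div_4 (hb0 : 0 ≤ b) (hb3 : b ≤ 3) : (b + 3) ^ 3 / (8 * (b + 1)) ≤ 27 / 4 := by
  rw [div_le_div_iff₀ (by linarith) (by norm_num)]
  nlinarith [mul_nonneg (sub_nonneg.2 hb3) (show 0 ≤ b ^ 2 + 12 * b + 9 by positivity)]

end Minimum

lemma sqrt_nine_sub_eight_mul_mem_Ioc {a : ℝ} (ha : a ∈ Ico 0 1) :
    √(9 - 8 * a) ∈ Ioc 1 3 := by
  obtain ⟨ha0, ha1⟩ := ha
  exact ⟨Real.lt_sqrt_of_sq_lt (by linarith), Real.sqrt_le_iff.2 ⟨by norm_num, by linarith⟩⟩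

lemma tendsto_fFn_atTop {a c : ℝ} {l : Filter ℝ} (hl : ∀ᶠ u in l, u ∈ Ioo 0 1)
    (hden : Tendsto (fun u ↦ u ^ 2 * (1 - u)) l (𝓝 0))
    (hnum : Tendsto (fun u ↦ a * u + (1 - a)) l (𝓝 c)) (hc : 0 < c) :
    Tendsto (fFn a) l atTop := by
  have hden' : Tendsto (fun u ↦ u ^ 2 * (1 - u)) l (𝓝[>] 0) := by
    refine tendsto_nhdsWithin_iff.2 ⟨hden, hl.mono fun u ⟨hu0, hu1⟩ ↦ ?_⟩
    have : 0 < 1 - u := by linarith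
    exact mul_pos (pow_pos hu0 2) this
  refine (hnum.pos_mul_atTop hc (tendsto_inv_nhdsGT_zero.comp hden')).congr' ?_
  filter_upwards [hl] with u ⟨hu0, hu1⟩
  rw [Function.comp_apply, fFn_eq_div hu0.ne' (by linarith), div_eq_mul_inv]

/-- for `a ∈ [0,1)` and `b = √(9 − 8a)` (so `b ∈ (1,3]`), the function `f_a`
on `(0,1)` has minimum value `(b+3)³/(8(b+1))`, attained exactly at `u = (b+1)/(b+3)`;
this minimum lies in `(4, 27/4]` and equals `27/4` when `a = 0`; in particular
`f_a > 4` on `(0,1)`, and `f_a(u) → ∞` as `u → 0⁺` and as `u → 1⁻`. -/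
theorem stmt9 (a : ℝ) (ha : a ∈ Set.Ico (0 : ℝ) 1)
    (b : ℝ) (hb : b = Real.sqrt (9 - 8 * a)) :
    b ∈ Set.Ioc (1 : ℝ) 3 ∧
    (∀ u ∈ Set.Ioo (0 : ℝ) 1,
      (b + 3) ^ 3 / (8 * (b + 1)) ≤ fFn a u ∧
      (fFn a u = (b + 3) ^ 3 / (8 * (b + 1)) ↔ u = (b + 1) / (b + 3))) ∧
    (b + 3) ^ 3 / (8 * (b + 1)) ∈ Set.Ioc (4 : ℝ) (27 / 4) ∧
    (a = 0 → (b + 3) ^ 3 / (8 * (b + 1)) = 27 / 4) ∧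
    (∀ u ∈ Set.Ioo (0 : ℝ) 1, 4 < fFn a u) ∧
    Filter.Tendsto (fFn a) (nhdsWithin 0 (Set.Ioi 0)) Filter.atTop ∧
    Filter.Tendsto (fFn a) (nhdsWithin 1 (Set.Iio 1)) Filter.atTop := by
  have hb13 : b ∈ Ioc 1 3 := hb ▸ sqrt_nine_sub_eight_mul_mem_Ioc ha
  have hab : b ^ 2 = 9 - 8 * a := by rw [hb, Real.sq_sqrt (by linarith [ha.2])]
  have hden : Continuous fun u : ℝ ↦ u ^ 2 * (1 - u) := by fun_prop
  have hnum : Continuous fun u : ℝ ↦ a * u + (1 - a) := by fun_prop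
  refine ⟨hb13, fun u hu ↦ ⟨cube_div_le_fFn hab hb13.1 hu, fFn_eq_cube_div_iff hab hb13.1 hu⟩,
    ⟨four_lt_cube_div hb13.1, cube_div_le_27_div_4 (by linarith [hb13.1]) hb13.2⟩,
    fun ha0 ↦ ?_, fun u hu ↦ (four_lt_cube_div hb13.1).trans_le (cube_div_le_fFn hab hb13.1 hu),
    ?_, ?_⟩
  · obtain rfl : b = 3 := by nlinarith [hb13.1]
    norm_num
  · exact tendsto_fFn_atTop (Ioo_mem_nhdsGT one_pos)
      ((hden.tendsto' 0 0 (by norm_num)).mono_left nhdsWithin_le_nhds)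
      ((hnum.tendsto' 0 (1 - a) (by ring)).mono_left nhdsWithin_le_nhds) (by linarith [ha.2])
  · exact tendsto_fFn_atTop (Ioo_mem_nhdsLT one_pos)
      ((hden.tendsto' 1 0 (by norm_num)).mono_left nhdsWithin_le_nhds)
      ((hnum.tendsto' 1 1 (by ring)).mono_left nhdsWithin_le_nhds) one_pos
end
end

section
/- The map ρ : [0,1/2]^ℤ → C(ℝ,ℝ), ρ(α) = p_α, is injective and continuous, where [0,1/2]^ℤ carries the product topology and C(ℝ,ℝ) the compact-open topology (the topology of uniform convergence on compact subsets of ℝ); consequently, since [0,1/2]^ℤ is compact and C(ℝ,ℝ) is Hausdorff, ρ is a homeomorphism of [0,1/2]^ℤ onto its image. -/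
noncomputable section

open Set Filter Topology

lemma gFn_one {a u : ℝ} (h : u ∉ Set.Ioo (0 : ℝ) 1) : gFn a u = 1 := if_neg h

/-- Local two-factor form of `pFn`. -/
lemma pFn_eq (α : ℤ → ℝ) (m : ℤ) (u : ℝ) (hu : u ∈ Set.Ioo ((m : ℝ) - 1) ((m : ℝ) + 1)) :
    pFn α u = -1 + gFn (α (m - 1)) (u - ((m : ℝ) - 1)) * gFn (α m) (u - (m : ℝ)) := by
  unfold pFn
  congr 1
  rw [tprod_eq_prod (s := {m - 1, m})]
  · rw [Finset.prod_pair (by omega)]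
    push_cast
    ring_nf
  · intro n hn
    apply gFn_one
    rintro ⟨h1, h2⟩
    simp only [Finset.mem_insert, Finset.mem_singleton] at hn
    obtain ⟨hum, hum'⟩ := hu
    have h3 : (n : ℝ) < (m : ℝ) + 1 := by linarith
    have h4 : (m : ℝ) - 1 < (n : ℝ) + 1 := by linarith
    have h3' : n < m + 1 := by exact_mod_cast h3
    have h4' : m - 1 < n + 1 := by
      have : ((m : ℝ) - 1 : ℝ) = ((m - 1 : ℤ) : ℝ) := by push_cast; ring
      rw [this] at h4
      exact_mod_cast h4
    omega

/-- The uniform bound: for `a ∈ [0,1/2]`, `fFn a u ≥ (2u²(1-u))⁻¹` on `(0,1)`. -/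
lemma fFn_lower {a u : ℝ} (ha : a ∈ Set.Icc (0 : ℝ) (1 / 2)) (hu : u ∈ Set.Ioo (0 : ℝ) 1) :
    (2 * (u ^ 2 * (1 - u)))⁻¹ ≤ fFn a u := by
  obtain ⟨ha0, ha1⟩ := ha
  obtain ⟨hu0, hu1⟩ := hu
  have hden1 : 0 < u * (1 - u) := by nlinarith
  have hden2 : 0 < u ^ 2 * (1 - u) := by nlinarith
  have h1 : 0 ≤ a / (u * (1 - u)) := div_nonneg ha0 hden1.le
  have h2 : (2 * (u ^ 2 * (1 - u)))⁻¹ ≤ (1 - a) / (u ^ 2 * (1 - u)) := by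
    rw [inv_eq_one_div]
    rw [div_le_div_iff₀ (by linarith) hden2]
    nlinarith
  unfold fFn
  linarith

/-- The bounding function. -/
def bFn (u : ℝ) : ℝ :=
  if u ∈ Set.Ioo (0 : ℝ) 1 then Real.exp (4 - (2 * (u ^ 2 * (1 - u)))⁻¹) else 0

lemma abs_gFn_sub_one_le {a u : ℝ} (ha : a ∈ Set.Icc (0 : ℝ) (1 / 2)) :
    |gFn a u - 1| ≤ bFn u := by
  by_cases h : u ∈ Set.Ioo (0 : ℝ) 1
  · rw [gFn, bFn, if_pos h, if_pos h]
    rw [add_sub_cancel_left, abs_of_nonneg (Real.exp_nonneg _)]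
    exact Real.exp_le_exp.2 (by linarith [fFn_lower ha h])
  · rw [gFn, bFn, if_neg h, if_neg h]
    simp

lemma tendsto_bFn {u₀ : ℝ} (h : u₀ = 0 ∨ u₀ = 1) : Tendsto bFn (𝓝 u₀) (𝓝 0) := by
  have hsplit : 𝓝 u₀ = 𝓝[Set.Ioo (0 : ℝ) 1] u₀ ⊔ 𝓝[(Set.Ioo (0 : ℝ) 1)ᶜ] u₀ := by
    rw [← nhdsWithin_union, Set.union_compl_self, nhdsWithin_univ]
  rw [hsplit, tendsto_sup]
  constructor
  · -- within Ioo 0 1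
    have h1 : Tendsto (fun u : ℝ => u ^ 2 * (1 - u)) (𝓝[Set.Ioo (0 : ℝ) 1] u₀) (𝓝[>] 0) := by
      apply tendsto_nhdsWithin_of_tendsto_nhds_of_eventually_within
      · have hcont : Continuous (fun u : ℝ => u ^ 2 * (1 - u)) := by fun_prop
        have : Tendsto (fun u : ℝ => u ^ 2 * (1 - u)) (𝓝 u₀) (𝓝 (u₀ ^ 2 * (1 - u₀))) :=
          hcont.tendsto u₀
        have hval : u₀ ^ 2 * (1 - u₀) = 0 := by rcases h with h | h <;> rw [h] <;> ring
        rw [hval] at this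
        exact this.mono_left nhdsWithin_le_nhds
      · filter_upwards [self_mem_nhdsWithin] with u hu
        obtain ⟨hu0, hu1⟩ := hu
        have : (0 : ℝ) < u ^ 2 := by positivity
        exact mul_pos this (by linarith)
    have h2 : Tendsto (fun u : ℝ => 2 * (u ^ 2 * (1 - u))) (𝓝[Set.Ioo (0 : ℝ) 1] u₀) (𝓝[>] 0) := by
      apply tendsto_nhdsWithin_of_tendsto_nhds_of_eventually_within
      · have := h1.mono_right nhdsWithin_le_nhds
        have h2' := this.const_mul (2 : ℝ)
        simpa using h2'
      · filter_upwards [h1 self_mem_nhdsWithin] with u hu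
        have hu' : (0:ℝ) < u ^ 2 * (1 - u) := hu
        exact Set.mem_Ioi.2 (by nlinarith)
    have h3 : Tendsto (fun u : ℝ => (2 * (u ^ 2 * (1 - u)))⁻¹) (𝓝[Set.Ioo (0 : ℝ) 1] u₀)
        atTop := tendsto_inv_nhdsGT_zero.comp h2
    have h4 : Tendsto (fun u : ℝ => 4 - (2 * (u ^ 2 * (1 - u)))⁻¹) (𝓝[Set.Ioo (0 : ℝ) 1] u₀)
        atBot := by
      have := tendsto_neg_atTop_atBot.comp h3
      have h5 := tendsto_atBot_add_const_left (𝓝[Set.Ioo (0 : ℝ) 1] u₀) 4 this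
      simpa [sub_eq_add_neg, Function.comp] using h5
    have h6 := Real.tendsto_exp_atBot.comp h4
    apply h6.congr'
    filter_upwards [self_mem_nhdsWithin] with u hu
    rw [bFn, if_pos hu]
    rfl
  · -- outside Ioo 0 1
    apply Tendsto.congr' _ tendsto_const_nhds
    filter_upwards [self_mem_nhdsWithin] with u hu
    rw [bFn, if_neg hu]

/-- Joint continuity of `gFn` on `[0,1/2] × ℝ`. -/
lemma continuous_gFn2 : Continuous fun p : Set.Icc (0 : ℝ) (1 / 2) × ℝ => gFn p.1 p.2 := by
  rw [continuous_iff_continuousAt]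
  rintro ⟨a₀, u₀⟩
  by_cases hio : u₀ ∈ Set.Ioo (0 : ℝ) 1
  · -- interior case
    have hopen : IsOpen {p : Set.Icc (0 : ℝ) (1 / 2) × ℝ | p.2 ∈ Set.Ioo (0 : ℝ) 1} :=
      isOpen_Ioo.preimage continuous_snd
    have hmem : ((a₀, u₀) : Set.Icc (0 : ℝ) (1 / 2) × ℝ) ∈
        {p : Set.Icc (0 : ℝ) (1 / 2) × ℝ | p.2 ∈ Set.Ioo (0 : ℝ) 1} := hio
    have hc : ContinuousAt (fun p : Set.Icc (0 : ℝ) (1 / 2) × ℝ =>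
        1 + Real.exp (4 - fFn (p.1 : ℝ) p.2)) (a₀, u₀) := by
      obtain ⟨hu0, hu1⟩ := hio
      have hd1 : u₀ * (1 - u₀) ≠ 0 := ne_of_gt (by nlinarith)
      have hd2 : u₀ ^ 2 * (1 - u₀) ≠ 0 := ne_of_gt (mul_pos (pow_pos hu0 2) (by linarith))
      have hfst : Continuous fun p : Set.Icc (0 : ℝ) (1 / 2) × ℝ => (p.1 : ℝ) :=
        continuous_subtype_val.comp continuous_fst
      apply ContinuousAt.add continuousAt_const
      apply Real.continuous_exp.continuousAt.comp
      apply ContinuousAt.sub continuousAt_const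
      unfold fFn
      apply ContinuousAt.add
      · exact (hfst.continuousAt).div
          (by fun_prop) (by simpa using hd1)
      · exact ((continuous_const.sub hfst).continuousAt).div
          (by fun_prop) (by simpa using hd2)
    apply hc.congr
    filter_upwards [hopen.mem_nhds hmem] with p hp
    rw [gFn, if_pos hp]
  · by_cases hb : u₀ = 0 ∨ u₀ = 1
    · -- boundary case: squeeze
      have hval : gFn (a₀ : ℝ) u₀ = 1 := gFn_one hio
      rw [ContinuousAt, hval]
      have hz : Tendsto (fun p : Set.Icc (0 : ℝ) (1 / 2) × ℝ => gFn (p.1 : ℝ) p.2 - 1)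
          (𝓝 (a₀, u₀)) (𝓝 0) := by
        apply squeeze_zero_norm (a := fun p => bFn p.2)
        · intro p
          exact abs_gFn_sub_one_le p.1.2
        · exact (tendsto_bFn hb).comp (continuous_snd.tendsto _)
      have := hz.add (tendsto_const_nhds (x := (1 : ℝ)))
      simpa using this
    · -- exterior case
      push_neg at hb
      have hout : u₀ ∉ Set.Icc (0 : ℝ) 1 := by
        intro hc
        rcases hb with ⟨h0, h1⟩
        exact hio ⟨lt_of_le_of_ne hc.1 (Ne.symm h0), lt_of_le_of_ne hc.2 h1⟩
      have hopen : IsOpen {p : Set.Icc (0 : ℝ) (1 / 2) × ℝ | p.2 ∈ (Set.Icc (0 : ℝ) 1)ᶜ} :=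
        isClosed_Icc.isOpen_compl.preimage continuous_snd
      apply ContinuousAt.congr (continuousAt_const (y := (1 : ℝ)))
      filter_upwards [hopen.mem_nhds hout] with p hp
      exact (gFn_one fun hc => hp (Set.Ioo_subset_Icc_self hc)).symm

/-- Joint continuity of `(α, u) ↦ p_α(u)`. -/
lemma continuous_P : Continuous fun p : (ℤ → Set.Icc (0 : ℝ) (1 / 2)) × ℝ =>
    pFn (fun n => ((p.1 n : ℝ))) p.2 := by
  rw [continuous_iff_continuousAt]
  rintro ⟨α₀, u₀⟩
  set m : ℤ := ⌊u₀⌋ with hm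
  have hu : u₀ ∈ Set.Ioo ((m : ℝ) - 1) ((m : ℝ) + 1) := by
    constructor
    · have := Int.floor_le u₀
      linarith
    · exact Int.lt_floor_add_one u₀
  have hopen : IsOpen {p : (ℤ → Set.Icc (0 : ℝ) (1 / 2)) × ℝ |
      p.2 ∈ Set.Ioo ((m : ℝ) - 1) ((m : ℝ) + 1)} := isOpen_Ioo.preimage continuous_snd
  have hc : ContinuousAt (fun p : (ℤ → Set.Icc (0 : ℝ) (1 / 2)) × ℝ =>
      -1 + gFn ((p.1 (m - 1) : ℝ)) (p.2 - ((m : ℝ) - 1)) * gFn ((p.1 m : ℝ)) (p.2 - (m : ℝ)))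
      (α₀, u₀) := by
    have c1 : Continuous fun p : (ℤ → Set.Icc (0 : ℝ) (1 / 2)) × ℝ =>
        (p.1 (m - 1), p.2 - ((m : ℝ) - 1)) :=
      ((continuous_apply (m - 1)).comp continuous_fst).prodMk
        (continuous_snd.sub continuous_const)
    have c2 : Continuous fun p : (ℤ → Set.Icc (0 : ℝ) (1 / 2)) × ℝ =>
        (p.1 m, p.2 - (m : ℝ)) :=
      ((continuous_apply m).comp continuous_fst).prodMk
        (continuous_snd.sub continuous_const)
    exact (continuous_const.add ((continuous_gFn2.comp c1).mul
      (continuous_gFn2.comp c2))).continuousAt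
  have heq : (fun p : (ℤ → Set.Icc (0 : ℝ) (1 / 2)) × ℝ =>
      -1 + gFn ((p.1 (m - 1) : ℝ)) (p.2 - ((m : ℝ) - 1)) * gFn ((p.1 m : ℝ)) (p.2 - (m : ℝ)))
      =ᶠ[nhds (α₀, u₀)]
      (fun p => pFn (fun n => ((p.1 n : ℝ))) p.2) := by
    filter_upwards [hopen.mem_nhds hu] with p hp
    exact (pFn_eq (fun n => ((p.1 n : ℝ))) m p.2 hp).symm
  exact hc.congr heq

lemma gFn_half (a : ℝ) : gFn a (1 / 2) = 1 + Real.exp (4 - (8 - 4 * a)) := by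
  rw [gFn, if_pos (by norm_num)]
  congr 2
  unfold fFn
  norm_num
  ring

lemma pFn_half (α : ℤ → ℝ) (n : ℤ) : pFn α ((n : ℝ) + 1 / 2) = -1 + gFn (α n) (1 / 2) := by
  rw [pFn_eq α n ((n : ℝ) + 1 / 2) (by constructor <;> push_cast <;> linarith)]
  have h1 : gFn (α (n - 1)) ((n : ℝ) + 1 / 2 - ((n : ℝ) - 1)) = 1 := by
    apply gFn_one
    rintro ⟨_, h2⟩
    linarith
  rw [h1]
  norm_num

/-- the map `ρ : [0,1/2]^ℤ → C(ℝ,ℝ)`, `ρ(α) = p_α`, exists (each `p_α` is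
continuous), is injective and continuous for the product topology on `[0,1/2]^ℤ` and the
compact-open topology on `C(ℝ,ℝ)`, and is a homeomorphism onto its image (an embedding). -/
theorem stmt11 :
    ∃ ρ : (ℤ → Set.Icc (0 : ℝ) (1 / 2)) → C(ℝ, ℝ),
      (∀ (α : ℤ → Set.Icc (0 : ℝ) (1 / 2)) (u : ℝ),
        ρ α u = pFn (fun n => (α n : ℝ)) u) ∧
      Function.Injective ρ ∧
      Continuous ρ ∧
      Topology.IsEmbedding ρ := by
  set ρ : (ℤ → Set.Icc (0 : ℝ) (1 / 2)) → C(ℝ, ℝ) := fun α =>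
    ⟨fun u => pFn (fun n => (α n : ℝ)) u,
      continuous_P.comp (continuous_const.prodMk continuous_id)⟩ with hρ
  have hcont : Continuous ρ := ContinuousMap.continuous_of_continuous_uncurry _ continuous_P
  have hinj : Function.Injective ρ := by
    intro α β hαβ
    funext n
    have h := congrFun (congrArg (fun f : C(ℝ, ℝ) => (f : ℝ → ℝ)) hαβ) ((n : ℝ) + 1 / 2)
    simp only [hρ, ContinuousMap.coe_mk] at h
    rw [pFn_half, pFn_half, gFn_half, gFn_half] at h
    have h2 : Real.exp (4 - (8 - 4 * (α n : ℝ))) = Real.exp (4 - (8 - 4 * (β n : ℝ))) := by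
      linarith
    rw [Real.exp_eq_exp] at h2
    exact Subtype.ext (by linarith)
  exact ⟨ρ, fun α u => rfl, hinj, hcont, (hcont.isClosedEmbedding hinj).toIsEmbedding⟩

end
end

section
/- Let p : 𝕌 → Sym(n,ℝ) be smooth and let L : 𝕌 → GL(n,ℝ) be smooth with L''(u) + p(u)L(u) = 0 for all u and with L(u)ᵀL'(u) symmetric for all u (a Lagrangian matrix). Then the smooth map β_L : 𝕌×ℝ×ℝⁿ → 𝕌×ℝ×ℝⁿ defined by β_L(u,v,x) = ( u, v + ½ xᵀL(u)ᵀL'(u)x, L(u)x ) satisfies β_L* G_β(p) = G_ρ(h), where h(u) = L(u)ᵀL(u); that is, β_L is an isometry from the Rosen metric G_ρ(LᵀL) onto the Brinkmann metric G_β(p). -/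
open Matrix

attribute [local instance] Matrix.normedAddCommGroup Matrix.normedSpace

noncomputable section

/-- The Rosen metric `2 du dv − dxᵀ h(u) dx`, as a field of bilinear forms. -/
def Gr (n : ℕ) (h : ℝ → Matrix (Fin n) (Fin n) ℝ) :
    Mfd n → Mfd n → Mfd n → ℝ := fun m X₁ X₂ =>
  X₁.1 * X₂.2.1 + X₂.1 * X₁.2.1 - X₁.2.2 ⬝ᵥ (h m.1 *ᵥ X₂.2.2)

/-!
Write `y = Lx`, `w = L'x` and `η = Lξ`. Since `xᵀLᵀL'x = y·w`, the map is
`β_L(u, v, x) = (u, v + ½ y·w, y)`, and its differential sends `(a, b, ξ)` to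
`(a, b + ½ a (w·w − y·py) + η·w, η + a w)`: the Jacobi equation `L'' = −pL` turns `y·(L''x)`
into `−y·py`, and the Lagrangian condition gives `y·(L'ξ) = η·w`. In `G_β(p)` the `du²` terms
`w·w − y·py + y·py − w·w` and the mixed terms `a η·w − a w·η` then cancel, leaving
`a₁b₂ + a₂b₁ − η₁·η₂ = G_ρ(LᵀL)`.
-/

namespace Matrix

variable {ι R : Type*} [Fintype ι] [CommSemiring R]

theorem dotProduct_transpose_mul_mulVec (A B : Matrix ι ι R) (x y : ι → R) :
    x ⬝ᵥ ((Aᵀ * B) *ᵥ y) = (A *ᵥ x) ⬝ᵥ (B *ᵥ y) := by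
  rw [← mulVec_mulVec, dotProduct_mulVec, vecMul_transpose]

theorem mulVec_dotProduct_mulVec_comm_of_isSymm {A B : Matrix ι ι R} (h : (Aᵀ * B).IsSymm)
    (x y : ι → R) : (A *ᵥ x) ⬝ᵥ (B *ᵥ y) = (A *ᵥ y) ⬝ᵥ (B *ᵥ x) := by
  rw [← dotProduct_transpose_mul_mulVec, ← dotProduct_transpose_mul_mulVec, dotProduct_mulVec,
    ← mulVec_transpose, h.eq, dotProduct_comm]

end Matrix

variable {n : ℕ}

def mulVecL : Matrix (Fin n) (Fin n) ℝ →L[ℝ] (Fin n → ℝ) →L[ℝ] (Fin n → ℝ) :=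
  (mulVecBilin ℝ ℝ).toContinuousBilinearMap

def dotProductL : (Fin n → ℝ) →L[ℝ] (Fin n → ℝ) →L[ℝ] ℝ :=
  (dotProductBilin ℝ ℝ).toContinuousBilinearMap

/-- `β_L` is `brinkmannization L (deriv L)`. -/
def brinkmannization (L M : ℝ → Matrix (Fin n) (Fin n) ℝ) : Mfd n → Mfd n := fun m =>
  (m.1, m.2.1 + 1 / 2 * ((L m.1 *ᵥ m.2.2) ⬝ᵥ (M m.1 *ᵥ m.2.2)), L m.1 *ᵥ m.2.2)

theorem fderiv_brinkmannization_apply {L M : ℝ → Matrix (Fin n) (Fin n) ℝ}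
    {L' M' : Matrix (Fin n) (Fin n) ℝ} {m : Mfd n} (hL : HasDerivAt L L' m.1)
    (hM : HasDerivAt M M' m.1) (Z : Mfd n) :
    fderiv ℝ (brinkmannization L M) m Z =
      (Z.1, Z.2.1 + 1 / 2 * ((L m.1 *ᵥ m.2.2) ⬝ᵥ (M m.1 *ᵥ Z.2.2 + (Z.1 • M') *ᵥ m.2.2)
          + (L m.1 *ᵥ Z.2.2 + (Z.1 • L') *ᵥ m.2.2) ⬝ᵥ (M m.1 *ᵥ m.2.2)),
        L m.1 *ᵥ Z.2.2 + (Z.1 • L') *ᵥ m.2.2) := by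
  have hx : HasFDerivAt (fun m : Mfd n => m.2.2) _ m := (hasFDerivAt_snd (𝕜 := ℝ) (p := m)).snd
  have hLx := mulVecL.hasFDerivAt_of_bilinear (hL.hasFDerivAt.comp m hasFDerivAt_fst) hx
  have hMx := mulVecL.hasFDerivAt_of_bilinear (hM.hasFDerivAt.comp m hasFDerivAt_fst) hx
  have hβ : HasFDerivAt (brinkmannization L M) _ m := hasFDerivAt_fst.prodMk
    (((hasFDerivAt_fst.comp m hasFDerivAt_snd).add
      ((dotProductL.hasFDerivAt_of_bilinear hLx hMx).const_mul (1 / 2))).prodMk hLx)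
  rw [hβ.fderiv]
  rfl

theorem fderiv_brinkmannization_apply_of_jacobi {L M : ℝ → Matrix (Fin n) (Fin n) ℝ}
    {P M' : Matrix (Fin n) (Fin n) ℝ} {m : Mfd n} (hL : HasDerivAt L (M m.1) m.1)
    (hM : HasDerivAt M M' m.1) (hJacobi : M' + P * L m.1 = 0)
    (hLagrangian : ((L m.1)ᵀ * M m.1).IsSymm) (Z : Mfd n) :
    fderiv ℝ (brinkmannization L M) m Z =
      (Z.1, Z.2.1 + 1 / 2 * Z.1 * ((M m.1 *ᵥ m.2.2) ⬝ᵥ (M m.1 *ᵥ m.2.2)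
          - (L m.1 *ᵥ m.2.2) ⬝ᵥ (P *ᵥ (L m.1 *ᵥ m.2.2)))
          + (L m.1 *ᵥ Z.2.2) ⬝ᵥ (M m.1 *ᵥ m.2.2),
        L m.1 *ᵥ Z.2.2 + Z.1 • (M m.1 *ᵥ m.2.2)) := by
  have hM' : M' = -(P * L m.1) := eq_neg_of_add_eq_zero_left hJacobi
  rw [fderiv_brinkmannization_apply hL hM, smul_mulVec, smul_mulVec, hM', neg_mulVec,
    ← mulVec_mulVec]
  refine Prod.ext rfl (Prod.ext ?_ rfl)
  simp only [dotProduct_add, add_dotProduct, dotProduct_smul, smul_dotProduct, dotProduct_neg,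
    smul_neg, smul_eq_mul, mulVec_dotProduct_mulVec_comm_of_isSymm hLagrangian m.2.2 Z.2.2]
  ring

theorem pull_brinkmannization_Gb_eq_Gr {L M : ℝ → Matrix (Fin n) (Fin n) ℝ}
    {p : ℝ → Matrix (Fin n) (Fin n) ℝ} {M' : Matrix (Fin n) (Fin n) ℝ} {m : Mfd n}
    (hL : HasDerivAt L (M m.1) m.1) (hM : HasDerivAt M M' m.1)
    (hJacobi : M' + p m.1 * L m.1 = 0) (hLagrangian : ((L m.1)ᵀ * M m.1).IsSymm) (X Y : Mfd n) :
    pull n (brinkmannization L M) (Gb n p) m X Y = Gr n (fun u => (L u)ᵀ * L u) m X Y := by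
  simp only [pull, fderiv_brinkmannization_apply_of_jacobi hL hM hJacobi hLagrangian, Gb, Gr,
    brinkmannization, dotProduct_transpose_mul_mulVec, dotProduct_add, add_dotProduct,
    dotProduct_smul, smul_dotProduct, smul_eq_mul, dotProduct_comm (M m.1 *ᵥ m.2.2)]
  ring

theorem stmt13_general (n : ℕ)
    (U : Set ℝ) (hUopen : IsOpen U)
    (p : ℝ → Matrix (Fin n) (Fin n) ℝ)
    (L : ℝ → Matrix (Fin n) (Fin n) ℝ)
    (hLsmooth : ContDiffOn ℝ (⊤ : ℕ∞) L U)
    (hJacobi : ∀ u ∈ U, deriv (deriv L) u + p u * L u = 0)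
    (hLagrangian : ∀ u ∈ U, ((L u)ᵀ * deriv L u)ᵀ = (L u)ᵀ * deriv L u)
    (βL : Mfd n → Mfd n)
    (hβL : βL = fun m =>
      (m.1,
       m.2.1 + (1 / 2) * (m.2.2 ⬝ᵥ (((L m.1)ᵀ * deriv L m.1) *ᵥ m.2.2)),
       L m.1 *ᵥ m.2.2)) :
    ∀ m ∈ {m : Mfd n | m.1 ∈ U}, ∀ X Y,
      pull n βL (Gb n p) m X Y = Gr n (fun u => (L u)ᵀ * L u) m X Y := by
  rintro m (hm : m.1 ∈ U) X Y
  obtain ⟨hLdiff, hL'smooth⟩ := (contDiffOn_infty_iff_deriv_of_isOpen hUopen).1 hLsmooth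
  have hL : HasDerivAt L (deriv L m.1) m.1 :=
    (hLdiff.differentiableAt (hUopen.mem_nhds hm)).hasDerivAt
  have hL' : HasDerivAt (deriv L) (deriv (deriv L) m.1) m.1 :=
    ((hL'smooth.differentiableOn (by simp)).differentiableAt (hUopen.mem_nhds hm)).hasDerivAt
  have hβ : βL = brinkmannization L (deriv L) := by
    simp only [hβL, dotProduct_transpose_mul_mulVec]
    rfl
  rw [hβ]
  exact pull_brinkmannization_Gb_eq_Gr hL hL' (hJacobi m.1 hm) (hLagrangian m.1 hm) X Y

/-- given a Lagrangian matrix `L` for `p` (i.e. `L'' + pL = 0`, `L`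
invertible, `LᵀL'` symmetric), the Brinkmannization map
`β_L(u,v,x) = (u, v + ½xᵀLᵀL'x, Lx)` pulls back the Brinkmann metric `G_β(p)` to the
Rosen metric `G_ρ(LᵀL)`, i.e. it is an isometry `G_ρ(LᵀL) → G_β(p)`. -/
theorem stmt13 (n : ℕ) (hn : 1 ≤ n)
    (U : Set ℝ) (hUopen : IsOpen U) (hUconv : Convex ℝ U) (hUne : U.Nonempty)
    (p : ℝ → Matrix (Fin n) (Fin n) ℝ)
    (hpsmooth : ContDiffOn ℝ (⊤ : ℕ∞) p U)
    (hpsymm : ∀ u ∈ U, (p u)ᵀ = p u)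
    (L : ℝ → Matrix (Fin n) (Fin n) ℝ)
    (hLsmooth : ContDiffOn ℝ (⊤ : ℕ∞) L U)
    (hLinv : ∀ u ∈ U, IsUnit (L u))
    (hJacobi : ∀ u ∈ U, deriv (deriv L) u + p u * L u = 0)
    (hLagrangian : ∀ u ∈ U, ((L u)ᵀ * deriv L u)ᵀ = (L u)ᵀ * deriv L u)
    (βL : Mfd n → Mfd n)
    (hβL : βL = fun m =>
      (m.1,
       m.2.1 + (1 / 2) * (m.2.2 ⬝ᵥ (((L m.1)ᵀ * deriv L m.1) *ᵥ m.2.2)),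
       L m.1 *ᵥ m.2.2)) :
    ∀ m ∈ {m : Mfd n | m.1 ∈ U}, ∀ X Y,
      pull n βL (Gb n p) m X Y = Gr n (fun u => (L u)ᵀ * L u) m X Y :=
  stmt13_general n U hUopen p L hLsmooth hJacobi hLagrangian βL hβL
end
end

section
/- Let h : 𝕌 → Sym(n,ℝ) be smooth with h(u) positive definite for all u, let H : 𝕌 → Sym(n,ℝ) be smooth with H(u)ᵀ = H(u) and h(u)H'(u) = I for all u, and let E be a constant symmetric n×n matrix. Define h̄(u) = (I + H(u)E)ᵀ h(u) (I + H(u)E). Then the smooth map ψ : 𝕌×ℝ×ℝⁿ → 𝕌×ℝ×ℝⁿ given by ψ(u, v̄, x̄) = ( u, v̄ + ½ x̄ᵀE H(u) E x̄ + ½ x̄ᵀE x̄, (I + H(u)E)x̄ ) satisfies ψ* G_ρ(h) = G_ρ(h̄), where G_ρ(h̄)(m)(X₁,X₂) = a₁b₂ + a₂b₁ − ξ₁ᵀh̄(u)ξ₂. In particular, if I + H(u)E is invertible for all u ∈ 𝕌, then ψ is an isometry from the Rosen metric G_ρ(h̄) onto the Rosen metric G_ρ(h). -/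
/-!
Write `x̄` for the fibre coordinate and `H'` for the derivative of `H`. Since `E` and `EHE` are
symmetric, `dψ` sends `(a, b, ξ)` to
`(a, b + x̄ᵀ(E + EHE)ξ + ½ a x̄ᵀEH'Ex̄, (I + HE)ξ + a H'Ex̄)`.
As `h` is symmetric and `hH' = I`, also `H'ᵀh = I`; hence in `ψ*G_ρ(h)` the part of the
`x`-component coming from `a H'Ex̄` contributes exactly `a₁a₂ x̄ᵀEH'Ex̄` and `aᵢ x̄ᵀ(E + EHE)ξⱼ`,
which cancel the new terms of the `v`-component, leaving `ξ₁ᵀ(I + HE)ᵀh(I + HE)ξ₂ = ξ₁ᵀh̄ξ₂`.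
Bijectivity holds fibrewise over `u`: there `ψ` is the invertible linear map `I + HE` in `x̄`
combined with a shear in `v̄`.
-/

open Matrix

attribute [local instance] Matrix.normedAddCommGroup Matrix.normedSpace

noncomputable section

section Calculus

variable {𝕜 F ι κ : Type*} [NontriviallyNormedField 𝕜] [CompleteSpace 𝕜]
  [NormedAddCommGroup F] [NormedSpace 𝕜 F] [Fintype ι] [Fintype κ] {p : F}

theorem HasFDerivAt.dotProduct {v w : F → κ → 𝕜} {v' w' : F →L[𝕜] κ → 𝕜}
    (hv : HasFDerivAt v v' p) (hw : HasFDerivAt w w' p) :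
    HasFDerivAt (fun q => v q ⬝ᵥ w q)
      ((dotProductBilin 𝕜 𝕜 (v p)).toContinuousLinearMap.comp w' +
        ((dotProductBilin 𝕜 𝕜).flip (w p)).toContinuousLinearMap.comp v') p :=
  ((dotProductBilin 𝕜 𝕜 : (κ → 𝕜) →ₗ[𝕜] (κ → 𝕜) →ₗ[𝕜] 𝕜).toContinuousBilinearMap
    |>.hasFDerivAt_of_bilinear hv hw).congr_fderiv (ContinuousLinearMap.ext fun _ => rfl)

theorem HasDerivAt.comp_hasFDerivAt_mulVec {A : 𝕜 → Matrix ι κ 𝕜} {A' : Matrix ι κ 𝕜}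
    {f : F → 𝕜} {f' : F →L[𝕜] 𝕜} {v : F → κ → 𝕜} {v' : F →L[𝕜] κ → 𝕜}
    (hA : HasDerivAt A A' (f p)) (hf : HasFDerivAt f f' p) (hv : HasFDerivAt v v' p) :
    HasFDerivAt (fun q => A (f q) *ᵥ v q)
      ((A (f p)).mulVecLin.toContinuousLinearMap.comp v' + f'.smulRight (A' *ᵥ v p)) p := by
  refine ((mulVecBilin 𝕜 𝕜 : Matrix ι κ 𝕜 →ₗ[𝕜] _ →ₗ[𝕜] _).toContinuousBilinearMap
    |>.hasFDerivAt_of_bilinear (hA.hasFDerivAt.comp p hf) hv).congr_fderiv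
    (ContinuousLinearMap.ext fun X => ?_)
  -- `simp` cannot evaluate this: `mulVecBilin` sees the product topology on matrices, `hA` the
  -- normed one, and the two instances agree only up to unfolding.
  change A (f p) *ᵥ v' X + (f' X • A') *ᵥ v p = A (f p) *ᵥ v' X + f' X • (A' *ᵥ v p)
  rw [smul_mulVec]

end Calculus

theorem Matrix.mulVec_dotProduct_mulVec_mulVec {R ι κ μ : Type*} [CommSemiring R] [Fintype ι]
    [Fintype κ] [Fintype μ] (A : Matrix ι κ R) (M : Matrix ι ι R) (B : Matrix ι μ R)
    (x : κ → R) (y : μ → R) :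
    (A *ᵥ x) ⬝ᵥ (M *ᵥ (B *ᵥ y)) = x ⬝ᵥ ((Aᵀ * M * B) *ᵥ y) := by
  rw [dotProduct_comm, ← dotProduct_transpose_mulVec, mulVec_mulVec, mulVec_mulVec,
    Matrix.mul_assoc]

theorem Matrix.IsSymm.dotProduct_mulVec_comm {R ι : Type*} [CommSemiring R] [Fintype ι]
    {S : Matrix ι ι R} (hS : S.IsSymm) (x y : ι → R) : x ⬝ᵥ (S *ᵥ y) = y ⬝ᵥ (S *ᵥ x) := by
  rw [← dotProduct_transpose_mulVec, hS.eq]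

theorem Set.bijOn_fiberwise_shear {α G R ι : Type*} [AddCommGroup G] [CommRing R] [Fintype ι]
    [DecidableEq ι] (s : Set α) (q : α → (ι → R) → G) (A : α → Matrix ι ι R)
    (hA : ∀ u ∈ s, IsUnit (A u)) :
    Set.BijOn (fun m : α × G × (ι → R) => (m.1, m.2.1 + q m.1 m.2.2, A m.1 *ᵥ m.2.2))
      {m | m.1 ∈ s} {m | m.1 ∈ s} := by
  have hdet : ∀ u ∈ s, IsUnit (A u).det := fun u hu => (isUnit_iff_isUnit_det _).mp (hA u hu)
  refine Set.InvOn.bijOn (f' := fun m => (m.1, m.2.1 - q m.1 ((A m.1)⁻¹ *ᵥ m.2.2),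
    (A m.1)⁻¹ *ᵥ m.2.2)) ⟨fun m hm => ?_, fun m hm => ?_⟩ (fun m hm => hm) (fun m hm => hm)
  · simp [mulVec_mulVec, nonsing_inv_mul _ (hdet _ hm)]
  · simp [mulVec_mulVec, mul_nonsing_inv _ (hdet _ hm)]

variable {n : ℕ}

def rosenTransform (H : ℝ → Matrix (Fin n) (Fin n) ℝ) (E : Matrix (Fin n) (Fin n) ℝ) :
    Mfd n → Mfd n := fun m =>
  (m.1,
   m.2.1 + (1 / 2) * (m.2.2 ⬝ᵥ ((E * H m.1 * E) *ᵥ m.2.2)) + (1 / 2) * (m.2.2 ⬝ᵥ (E *ᵥ m.2.2)),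
   (1 + H m.1 * E) *ᵥ m.2.2)

@[simp]
theorem rosenTransform_fst (H : ℝ → Matrix (Fin n) (Fin n) ℝ) (E : Matrix (Fin n) (Fin n) ℝ)
    (m : Mfd n) : (rosenTransform H E m).1 = m.1 := rfl

/-- In this form `H` is the only matrix-valued function of the point, so differentiating needs no
product rule for matrices. -/
theorem rosenTransform_eq_mulVec (H : ℝ → Matrix (Fin n) (Fin n) ℝ) (E : Matrix (Fin n) (Fin n) ℝ) :
    rosenTransform H E = fun m =>
      (m.1, m.2.1 + (1 / 2) * (m.2.2 ⬝ᵥ (E *ᵥ (H m.1 *ᵥ (E *ᵥ m.2.2))))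
        + (1 / 2) * (m.2.2 ⬝ᵥ (E *ᵥ m.2.2)), m.2.2 + H m.1 *ᵥ (E *ᵥ m.2.2)) := by
  ext m <;> simp [rosenTransform, mulVec_mulVec, add_mulVec, Matrix.mul_assoc]

theorem fderiv_rosenTransform_apply {H : ℝ → Matrix (Fin n) (Fin n) ℝ}
    {H' : Matrix (Fin n) (Fin n) ℝ} (E : Matrix (Fin n) (Fin n) ℝ) {m : Mfd n}
    (hH : HasDerivAt H H' m.1) (X : Mfd n) :
    fderiv ℝ (rosenTransform H E) m X =
      (X.1,
       X.2.1 + (1 / 2) * (m.2.2 ⬝ᵥ ((E * H m.1 * E) *ᵥ X.2.2) + X.2.2 ⬝ᵥ ((E * H m.1 * E) *ᵥ m.2.2)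
          + X.1 * (m.2.2 ⬝ᵥ ((E * H' * E) *ᵥ m.2.2)))
        + (1 / 2) * (m.2.2 ⬝ᵥ (E *ᵥ X.2.2) + X.2.2 ⬝ᵥ (E *ᵥ m.2.2)),
       (1 + H m.1 * E) *ᵥ X.2.2 + X.1 • ((H' * E) *ᵥ m.2.2)) := by
  have hu : HasFDerivAt (fun p : Mfd n => p.1) _ m := hasFDerivAt_fst (𝕜 := ℝ)
  have hv : HasFDerivAt (fun p : Mfd n => p.2.1) _ m :=
    hasFDerivAt_fst.comp m (hasFDerivAt_snd (𝕜 := ℝ))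
  have hx : HasFDerivAt (fun p : Mfd n => p.2.2) _ m :=
    hasFDerivAt_snd.comp m (hasFDerivAt_snd (𝕜 := ℝ))
  have hEx := E.mulVecLin.toContinuousLinearMap.hasFDerivAt.comp m hx
  have hHEx := hH.comp_hasFDerivAt_mulVec hu hEx
  have hq := (hv.add ((hx.dotProduct (E.mulVecLin.toContinuousLinearMap.hasFDerivAt.comp m
    hHEx)).const_mul (1 / 2))).add ((hx.dotProduct hEx).const_mul (1 / 2))
  have hψ : HasFDerivAt (rosenTransform H E) _ m :=
    rosenTransform_eq_mulVec H E ▸ hu.prodMk (hq.prodMk (hx.add hHEx))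
  rw [hψ.fderiv]
  simp only [one_div, LinearMap.coe_toContinuousLinearMap', Function.comp_apply, mulVecBilin_apply,
    mulVec_mulVec, ContinuousLinearMap.comp_add, add_assoc, smul_add, ContinuousLinearMap.prod_apply,
    ContinuousLinearMap.coe_fst', _root_.add_apply, ContinuousLinearMap.comp_apply,
    ContinuousLinearMap.coe_snd', _root_.smul_apply, dotProductBilin_apply_apply, smul_eq_mul,
    ContinuousLinearMap.smulRight_apply, map_smul, LinearMap.flip_apply, Matrix.mul_assoc,
    add_mulVec, one_mulVec, Prod.mk.injEq, add_right_inj, and_true, true_and]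
  ring

theorem pull_rosenTransform_Gr {h H hbar : ℝ → Matrix (Fin n) (Fin n) ℝ}
    {H' E : Matrix (Fin n) (Fin n) ℝ} {m : Mfd n} (hH : HasDerivAt H H' m.1)
    (hh : (h m.1).IsSymm) (hhH' : h m.1 * H' = 1) (hHs : (H m.1).IsSymm) (hE : E.IsSymm)
    (hhbar : hbar m.1 = (1 + H m.1 * E)ᵀ * h m.1 * (1 + H m.1 * E)) (X Y : Mfd n) :
    pull n (rosenTransform H E) (Gr n h) m X Y = Gr n hbar m X Y := by
  have hH'h : H'ᵀ * h m.1 = 1 := by rw [← hh.eq, ← transpose_mul, hhH', transpose_one]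
  have hquad : (H' * E)ᵀ * h m.1 * (H' * E) = E * H' * E := by
    rw [transpose_mul, hE.eq, Matrix.mul_assoc E, hH'h, Matrix.mul_one, Matrix.mul_assoc]
  have hcross : (H' * E)ᵀ * h m.1 * (1 + H m.1 * E) = E + E * H m.1 * E := by
    rw [transpose_mul, hE.eq, Matrix.mul_assoc E, hH'h, Matrix.mul_one, Matrix.mul_add,
      Matrix.mul_one, Matrix.mul_assoc]
  have hEHE : (E * H m.1 * E).IsSymm := by
    rw [IsSymm, transpose_mul, transpose_mul, hE.eq, hHs.eq, Matrix.mul_assoc]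
  have hcross' : (1 + H m.1 * E)ᵀ * h m.1 * (H' * E) = E + E * H m.1 * E := by
    rw [← (hE.add hEHE).eq, ← hcross, transpose_mul, transpose_mul, transpose_transpose, hh.eq,
      Matrix.mul_assoc]
  simp only [pull, Gr, fderiv_rosenTransform_apply E hH, rosenTransform_fst, mulVec_add,
    mulVec_smul, add_dotProduct, dotProduct_add, smul_dotProduct, dotProduct_smul, smul_eq_mul,
    mulVec_dotProduct_mulVec_mulVec]
  rw [hquad, hcross, hcross', ← hhbar, add_mulVec, dotProduct_add, add_mulVec, dotProduct_add,
    hEHE.dotProduct_mulVec_comm X.2.2, hEHE.dotProduct_mulVec_comm Y.2.2,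
    hE.dotProduct_mulVec_comm X.2.2, hE.dotProduct_mulVec_comm Y.2.2]
  ring

theorem stmt14_general (n : ℕ)
    (U : Set ℝ) (hUopen : IsOpen U)
    (h : ℝ → Matrix (Fin n) (Fin n) ℝ)
    (hhpos : ∀ u ∈ U, (h u).PosDef)
    (H : ℝ → Matrix (Fin n) (Fin n) ℝ)
    (hHsmooth : ContDiffOn ℝ (⊤ : ℕ∞) H U)
    (hHsymm : ∀ u ∈ U, (H u)ᵀ = H u)
    (hHprim : ∀ u ∈ U, h u * deriv H u = 1)
    (E : Matrix (Fin n) (Fin n) ℝ) (hE : Eᵀ = E)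
    (hbar : ℝ → Matrix (Fin n) (Fin n) ℝ)
    (hhbar : ∀ u : ℝ, hbar u = (1 + H u * E)ᵀ * h u * (1 + H u * E))
    (ψ : Mfd n → Mfd n)
    (hψ : ψ = fun m =>
      (m.1,
       m.2.1 + (1 / 2) * (m.2.2 ⬝ᵥ ((E * H m.1 * E) *ᵥ m.2.2))
            + (1 / 2) * (m.2.2 ⬝ᵥ (E *ᵥ m.2.2)),
       (1 + H m.1 * E) *ᵥ m.2.2)) :
    (∀ m ∈ {m : Mfd n | m.1 ∈ U}, ∀ X Y,
      pull n ψ (Gr n h) m X Y = Gr n hbar m X Y) ∧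
    ((∀ u ∈ U, IsUnit (1 + H u * E)) →
      Set.BijOn ψ {m : Mfd n | m.1 ∈ U} {m : Mfd n | m.1 ∈ U}) := by
  subst hψ
  refine ⟨fun m (hm : m.1 ∈ U) X Y => ?_, fun hA => ?_⟩
  · have hH : HasDerivAt H (deriv H m.1) m.1 :=
      ((hHsmooth.contDiffAt (hUopen.mem_nhds hm)).differentiableAt (by simp)).hasDerivAt
    exact pull_rosenTransform_Gr hH (isHermitian_iff_isSymm.mp (hhpos m.1 hm).isHermitian)
      (hHprim m.1 hm) (hHsymm m.1 hm) hE (hhbar m.1) X Y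
  · simpa only [← add_assoc] using Set.bijOn_fiberwise_shear U
      (fun u x => 1 / 2 * (x ⬝ᵥ ((E * H u * E) *ᵥ x)) + 1 / 2 * (x ⬝ᵥ (E *ᵥ x)))
      (fun u => 1 + H u * E) hA

/-- with `hH'(u) = I`, `E` constant symmetric, and
`h̄ = (I + HE)ᵀ h (I + HE)`, the map
`ψ(u,v̄,x̄) = (u, v̄ + ½x̄ᵀEHEx̄ + ½x̄ᵀEx̄, (I + HE)x̄)` satisfies `ψ*G_ρ(h) = G_ρ(h̄)`;
in particular when `I + H(u)E` is invertible for all `u`, `ψ` is an isometry from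
`G_ρ(h̄)` onto `G_ρ(h)`. -/
theorem stmt14 (n : ℕ) (hn : 1 ≤ n)
    (U : Set ℝ) (hUopen : IsOpen U) (hUconv : Convex ℝ U) (hUne : U.Nonempty)
    (h : ℝ → Matrix (Fin n) (Fin n) ℝ)
    (hhsmooth : ContDiffOn ℝ (⊤ : ℕ∞) h U)
    (hhpos : ∀ u ∈ U, (h u).PosDef)
    (H : ℝ → Matrix (Fin n) (Fin n) ℝ)
    (hHsmooth : ContDiffOn ℝ (⊤ : ℕ∞) H U)
    (hHsymm : ∀ u ∈ U, (H u)ᵀ = H u)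
    (hHprim : ∀ u ∈ U, h u * deriv H u = 1)
    (E : Matrix (Fin n) (Fin n) ℝ) (hE : Eᵀ = E)
    (hbar : ℝ → Matrix (Fin n) (Fin n) ℝ)
    (hhbar : ∀ u : ℝ, hbar u = (1 + H u * E)ᵀ * h u * (1 + H u * E))
    (ψ : Mfd n → Mfd n)
    (hψ : ψ = fun m =>
      (m.1,
       m.2.1 + (1 / 2) * (m.2.2 ⬝ᵥ ((E * H m.1 * E) *ᵥ m.2.2))
            + (1 / 2) * (m.2.2 ⬝ᵥ (E *ᵥ m.2.2)),
       (1 + H m.1 * E) *ᵥ m.2.2)) :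
    (∀ m ∈ {m : Mfd n | m.1 ∈ U}, ∀ X Y,
      pull n ψ (Gr n h) m X Y = Gr n hbar m X Y) ∧
    ((∀ u ∈ U, IsUnit (1 + H u * E)) →
      Set.BijOn ψ {m : Mfd n | m.1 ∈ U} {m : Mfd n | m.1 ∈ U}) :=
  stmt14_general n U hUopen h hhpos H hHsmooth hHsymm hHprim E hE hbar hhbar ψ hψ
end
end

section
/- Let p : 𝕌 → Sym(n,ℝ) be smooth, write p(u) = p̃(u) + P(u)·I with tr(p̃(u)) = 0 and n·P(u) = tr(p(u)), and let G = G_β(p). Then: (i) the dilation field D(u,v,x) = (0, 2v, x) satisfies ℒ_D G = 2·G; (ii) the field H(u,v,x) = (0, 1, 0) satisfies ℒ_H G = 0; (iii) for any smooth q : 𝕌 → ℝⁿ with q''(u) + p(u)q(u) = 0, the field X_q(u,v,x) = (0, xᵀq'(u), q(u)) satisfies ℒ_{X_q} G = 0; (iv) for any smooth w : 𝕌 → ℝ and constant skew-symmetric n×n matrix W satisfying w''' + 4Pw' + 2P'w = 0 and wp̃' + 2w'p̃ + p̃W − Wp̃ = 0 on 𝕌, the field V_{(w,W)}(u,v,x)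 = ( w(u), ¼ w''(u)·xᵀx, ½ w'(u)x + Wx ) satisfies ℒ_{V_{(w,W)}} G = S·G with S(u,v,x) = w'(u). -/
/-! Only the `du²` coefficient `xᵀ p(u) x` of `G_β(p)` depends on the point, so along a vector
field `V` with derivative `V'` at `m = (u, v, x)` the Lie derivative is
`a₁ a₂ · D(xᵀ p x)[V m] + G(V' X₁, X₂) + G(X₁, V' X₂)`. For each of the four fields `V'` is
explicit and the claim becomes an identity between quadratic forms in `x`. For `X_q` it is the
Jacobi equation `q'' = -p q` together with the symmetry of `p(u)`. For `V_{(w,W)}` it is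
`xᵀ (w p' + 2 w' p + p W - W p + ½ w''' I) x = 0`, and after substituting `p = p̃ + P I` the
matrix in brackets is the sum of the matrix condition and `½ (w''' + 4 P w' + 2 P' w) I`. -/

open Matrix

attribute [local instance] Matrix.normedAddCommGroup Matrix.normedSpace

noncomputable section

/-- The trace part `P(u) = tr(p(u))/n` of `p`. -/
def trPart (n : ℕ) (p : ℝ → Matrix (Fin n) (Fin n) ℝ) (u : ℝ) : ℝ :=
  (p u).trace / n

/-- The trace-free part `p̃(u) = p(u) − P(u)·I` of `p`. -/
def tfPart (n : ℕ) (p : ℝ → Matrix (Fin n) (Fin n) ℝ) (u : ℝ) :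
    Matrix (Fin n) (Fin n) ℝ :=
  p u - trPart n p u • (1 : Matrix (Fin n) (Fin n) ℝ)

def dotProductCLM {ι : Type*} [Fintype ι] : (ι → ℝ) →L[ℝ] (ι → ℝ) →L[ℝ] ℝ :=
  (dotProductBilin ℝ ℝ).toContinuousBilinearMap

@[simp]
lemma dotProductCLM_apply {ι : Type*} [Fintype ι] (a b : ι → ℝ) : dotProductCLM a b = a ⬝ᵥ b :=
  rfl

theorem Matrix.mulVec_dotProduct {l m α : Type*} [Fintype l] [Fintype m] [CommSemiring α]
    (A : Matrix l m α) (a : m → α) (b : l → α) : (A *ᵥ a) ⬝ᵥ b = a ⬝ᵥ (Aᵀ *ᵥ b) := by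
  rw [dotProduct_transpose_mulVec, dotProduct_comm]

theorem ContDiffOn.hasDerivAt_deriv {𝕜 E : Type*} [NontriviallyNormedField 𝕜]
    [NormedAddCommGroup E] [NormedSpace 𝕜 E] {f : 𝕜 → E} {s : Set 𝕜} {k : WithTop ℕ∞} {x : 𝕜}
    (hf : ContDiffOn 𝕜 k f s) (hk : k ≠ 0) (hs : IsOpen s) (hx : x ∈ s) :
    HasDerivAt f (deriv f x) x :=
  ((hf.differentiableOn hk).differentiableAt (hs.mem_nhds hx)).hasDerivAt

def dilationField (n : ℕ) : Mfd n → Mfd n := fun m => (0, 2 * m.2.1, m.2.2)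

def nullField (n : ℕ) : Mfd n → Mfd n := fun _ => (0, 1, 0)

def heisenbergField {n : ℕ} (q q' : ℝ → Fin n → ℝ) : Mfd n → Mfd n :=
  fun m => (0, m.2.2 ⬝ᵥ q' m.1, q m.1)

def conformalField {n : ℕ} (w w' w'' : ℝ → ℝ) (W : Matrix (Fin n) (Fin n) ℝ) : Mfd n → Mfd n :=
  fun m => (w m.1, 1 / 4 * w'' m.1 * (m.2.2 ⬝ᵥ m.2.2), (1 / 2 * w' m.1) • m.2.2 + W *ᵥ m.2.2)

section LieDerivative

variable {n : ℕ} {p : ℝ → Matrix (Fin n) (Fin n) ℝ} {p' : Matrix (Fin n) (Fin n) ℝ} {m : Mfd n}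

theorem lieD_Gb {V : Mfd n → Mfd n} {V' : Mfd n →L[ℝ] Mfd n}
    (hp : HasDerivAt p p' m.1) (hV : HasFDerivAt V V' m) (X Y : Mfd n) :
    lieD n V (Gb n p) m X Y
      = X.1 * Y.1 * ((V m).1 * (m.2.2 ⬝ᵥ (p' *ᵥ m.2.2)) + (V m).2.2 ⬝ᵥ (p m.1 *ᵥ m.2.2)
          + m.2.2 ⬝ᵥ (p m.1 *ᵥ (V m).2.2))
        + Gb n p m (V' X) Y + Gb n p m X (V' Y) := by
  have hx : HasFDerivAt (𝕜 := ℝ) (fun m : Mfd n => m.2.2) _ m := (hasFDerivAt_id m).snd.snd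
  -- `x ⬝ᵥ (p *ᵥ x)` is differentiated as `∑ i, x i * (p i ⬝ᵥ x)`, one row of `p` at a time: a
  -- continuous bilinear map with a matrix argument would carry the topology instance of `Matrix`
  -- rather than the one of the local normed structure, and `simp` could not evaluate it.
  have hrow (i : Fin n) := dotProductCLM.hasFDerivAt_of_bilinear
    ((hasDerivAt_pi.1 hp i).hasFDerivAt.comp m hasFDerivAt_fst) hx
  have hquad := HasFDerivAt.fun_sum (u := Finset.univ) fun i _ =>
    ((hasFDerivAt_apply i m.2.2).comp m hx).mul (hrow i)
  have hG : HasFDerivAt (fun m' => Gb n p m' X Y) _ m :=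
    (((hquad.mul_const X.1).mul_const Y.1).const_add _).sub_const _
  have hrows (A : Matrix (Fin n) (Fin n) ℝ) (a b : Fin n → ℝ) :
      a ⬝ᵥ (A *ᵥ b) = ∑ i, a i * A i ⬝ᵥ b := rfl
  rw [lieD, hV.fderiv, hG.fderiv]
  simp only [Gb, _root_.add_apply, _root_.smul_apply,
    _root_.sum_apply, ContinuousLinearMap.comp_apply, ContinuousLinearMap.precompR_apply,
    ContinuousLinearMap.compL_apply, ContinuousLinearMap.precompL_apply,
    ContinuousLinearMap.coe_fst', ContinuousLinearMap.coe_snd', ContinuousLinearMap.coe_id',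
    ContinuousLinearMap.toSpanSingleton_apply, ContinuousLinearMap.proj_apply, Function.comp_apply,
    id, dotProductCLM_apply, smul_eq_mul, smul_add, map_smul, add_left_inj]
  simp only [hrows, Finset.mul_sum, ← Finset.sum_add_distrib]
  exact Finset.sum_congr rfl fun i _ => by ring

theorem lieD_dilationField (hp : HasDerivAt p p' m.1) (X Y : Mfd n) :
    lieD n (dilationField n) (Gb n p) m X Y = 2 * Gb n p m X Y := by
  have hm := hasFDerivAt_id (𝕜 := ℝ) m
  have hV : HasFDerivAt (dilationField n) _ m :=
    (hasFDerivAt_const (0 : ℝ) m).prodMk ((hm.snd.fst.const_mul (2 : ℝ)).prodMk hm.snd.snd)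
  rw [lieD_Gb hp hV]
  simp only [dilationField, Gb, ContinuousLinearMap.prod_apply, _root_.zero_apply,
    _root_.smul_apply, ContinuousLinearMap.comp_apply, ContinuousLinearMap.comp_id,
    ContinuousLinearMap.coe_fst', ContinuousLinearMap.coe_snd', smul_eq_mul, zero_mul, zero_add,
    mul_zero, add_zero]
  ring

theorem lieD_nullField (hp : HasDerivAt p p' m.1) (X Y : Mfd n) :
    lieD n (nullField n) (Gb n p) m X Y = 0 := by
  have hV : HasFDerivAt (𝕜 := ℝ) (nullField n) 0 m := hasFDerivAt_const _ m
  rw [lieD_Gb hp hV]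
  simp [nullField, Gb]

theorem lieD_heisenbergField {q q' : ℝ → Fin n → ℝ} {q'' : Fin n → ℝ}
    (hp : HasDerivAt p p' m.1) (hsymm : (p m.1)ᵀ = p m.1)
    (hq : HasDerivAt q (q' m.1) m.1) (hq' : HasDerivAt q' q'' m.1)
    (hJacobi : q'' + p m.1 *ᵥ q m.1 = 0) (X Y : Mfd n) :
    lieD n (heisenbergField q q') (Gb n p) m X Y = 0 := by
  have hx : HasFDerivAt (𝕜 := ℝ) (fun m : Mfd n => m.2.2) _ m := (hasFDerivAt_id m).snd.snd
  have hV : HasFDerivAt (heisenbergField q q') _ m :=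
    (hasFDerivAt_const (0 : ℝ) m).prodMk ((dotProductCLM.hasFDerivAt_of_bilinear hx
      (hq'.hasFDerivAt.comp m hasFDerivAt_fst)).prodMk (hq.hasFDerivAt.comp m hasFDerivAt_fst))
  rw [lieD_Gb hp hV, eq_neg_of_add_eq_zero_left hJacobi]
  simp only [heisenbergField, Gb, ContinuousLinearMap.prod_apply, _root_.zero_apply,
    _root_.add_apply, ContinuousLinearMap.comp_apply, ContinuousLinearMap.precompR_apply,
    ContinuousLinearMap.compL_apply, ContinuousLinearMap.precompL_apply,
    ContinuousLinearMap.comp_id, ContinuousLinearMap.coe_fst', ContinuousLinearMap.coe_snd',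
    ContinuousLinearMap.toSpanSingleton_apply,
    Function.comp_apply, dotProductCLM_apply, dotProduct_neg, dotProduct_smul, smul_dotProduct,
    smul_neg, smul_eq_mul, zero_mul, zero_add, mul_zero, add_zero]
  rw [dotProduct_comm (q m.1), Matrix.mulVec_dotProduct, hsymm, dotProduct_comm (q' m.1)]
  ring

theorem lieD_conformalField {w w' w'' : ℝ → ℝ} {w''' : ℝ} {W : Matrix (Fin n) (Fin n) ℝ}
    (hp : HasDerivAt p p' m.1) (hw : HasDerivAt w (w' m.1) m.1)
    (hw' : HasDerivAt w' (w'' m.1) m.1) (hw'' : HasDerivAt w'' w''' m.1) (hW : Wᵀ = -W)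
    (hcond : w m.1 • p' + (2 * w' m.1) • p m.1 + p m.1 * W - W * p m.1 + (w''' / 2) • 1 = 0)
    (X Y : Mfd n) :
    lieD n (conformalField w w' w'' W) (Gb n p) m X Y = w' m.1 * Gb n p m X Y := by
  have hx : HasFDerivAt (𝕜 := ℝ) (fun m : Mfd n => m.2.2) _ m := (hasFDerivAt_id m).snd.snd
  have hWx : HasFDerivAt (fun m : Mfd n => W *ᵥ m.2.2) _ m :=
    (Matrix.toLin' W).toContinuousLinearMap.hasFDerivAt.comp m hx
  have hV : HasFDerivAt (conformalField w w' w'' W) _ m :=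
    (hw.hasFDerivAt.comp m hasFDerivAt_fst).prodMk
      ((((hw''.hasFDerivAt.comp m hasFDerivAt_fst).const_mul (1 / 4 : ℝ)).mul
        (dotProductCLM.hasFDerivAt_of_bilinear hx hx)).prodMk
      ((((hw'.hasFDerivAt.comp m hasFDerivAt_fst).const_mul (1 / 2 : ℝ)).smul hx).add hWx))
  have hquad := congrArg (fun M => m.2.2 ⬝ᵥ (M *ᵥ m.2.2)) hcond
  simp only [add_mulVec, sub_mulVec, smul_mulVec, ← mulVec_mulVec, one_mulVec, dotProduct_add,
    dotProduct_sub, dotProduct_smul, smul_eq_mul, zero_mulVec, dotProduct_zero] at hquad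
  rw [lieD_Gb hp hV]
  simp only [conformalField, Gb, ContinuousLinearMap.prod_apply, _root_.add_apply,
    _root_.smul_apply, ContinuousLinearMap.comp_apply, ContinuousLinearMap.precompR_apply,
    ContinuousLinearMap.compL_apply, ContinuousLinearMap.precompL_apply,
    ContinuousLinearMap.comp_id, ContinuousLinearMap.coe_fst', ContinuousLinearMap.coe_snd',
    ContinuousLinearMap.toSpanSingleton_apply,
    ContinuousLinearMap.smulRight_apply, LinearMap.coe_toContinuousLinearMap', toLin'_apply,
    Function.comp_apply, dotProductCLM_apply, mulVec_dotProduct, hW, neg_mulVec,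
    mulVec_add, mulVec_smul, add_dotProduct, smul_dotProduct, dotProduct_add, dotProduct_smul,
    dotProduct_neg, smul_add, smul_eq_mul]
  rw [dotProduct_comm X.2.2 m.2.2, dotProduct_comm Y.2.2 m.2.2]
  linear_combination (X.1 * Y.1) * hquad

end LieDerivative

section TracePart

variable {n : ℕ} {p : ℝ → Matrix (Fin n) (Fin n) ℝ} {p' : Matrix (Fin n) (Fin n) ℝ} {u : ℝ}

theorem hasDerivAt_trPart (hp : HasDerivAt p p' u) : HasDerivAt (trPart n p) (p'.trace / n) u :=
  (HasDerivAt.fun_sum fun i _ => hasDerivAt_pi.1 (hasDerivAt_pi.1 hp i) i).div_const _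

theorem hasDerivAt_tfPart (hp : HasDerivAt p p' u) :
    HasDerivAt (tfPart n p) (p' - (p'.trace / n) • 1) u :=
  hp.sub ((hasDerivAt_trPart hp).smul_const 1)

theorem conformalField_condition_of_trPart_tfPart {w₀ w₁ w₃ : ℝ} {W : Matrix (Fin n) (Fin n) ℝ}
    (hp : HasDerivAt p p' u)
    (hODE : w₃ + 4 * trPart n p u * w₁ + 2 * deriv (trPart n p) u * w₀ = 0)
    (hMat : w₀ • deriv (tfPart n p) u + (2 * w₁) • tfPart n p u
      + tfPart n p u * W - W * tfPart n p u = 0) :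
    w₀ • p' + (2 * w₁) • p u + p u * W - W * p u + (w₃ / 2) • 1 = 0 := by
  have hp' : p' = deriv (tfPart n p) u + deriv (trPart n p) u • 1 := by
    have htf : deriv (tfPart n p) u = p' - (p'.trace / n) • 1 := (hasDerivAt_tfPart hp).deriv
    rw [htf, (hasDerivAt_trPart hp).deriv, sub_add_cancel]
  have hpu : p u = tfPart n p u + trPart n p u • 1 := (sub_add_cancel _ _).symm
  rw [hp', hpu]
  simp only [add_mul, mul_add, smul_mul_assoc, mul_smul_comm, one_mul, mul_one]
  linear_combination (norm := module) hMat + ((1 / 2 : ℝ) * hODE) • (1 : Matrix (Fin n) (Fin n) ℝ)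

end TracePart

theorem stmt16_general (n : ℕ)
    (U : Set ℝ) (hUopen : IsOpen U)
    (p : ℝ → Matrix (Fin n) (Fin n) ℝ)
    (hpsmooth : ContDiffOn ℝ (⊤ : ℕ∞) p U)
    (hpsymm : ∀ u ∈ U, (p u)ᵀ = p u) :
    (∀ m ∈ {m : Mfd n | m.1 ∈ U}, ∀ X Y,
      lieD n (fun m : Mfd n => (0, 2 * m.2.1, m.2.2)) (Gb n p) m X Y
        = 2 * Gb n p m X Y) ∧
    (∀ m ∈ {m : Mfd n | m.1 ∈ U}, ∀ X Y,
      lieD n (fun _ : Mfd n => ((0 : ℝ), (1 : ℝ), (0 : Fin n → ℝ))) (Gb n p) m X Y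
        = 0) ∧
    (∀ q : ℝ → (Fin n → ℝ), ContDiffOn ℝ (⊤ : ℕ∞) q U →
      (∀ u ∈ U, deriv (deriv q) u + p u *ᵥ q u = 0) →
      ∀ m ∈ {m : Mfd n | m.1 ∈ U}, ∀ X Y,
        lieD n (fun m : Mfd n => ((0 : ℝ), m.2.2 ⬝ᵥ deriv q m.1, q m.1))
          (Gb n p) m X Y = 0) ∧
    (∀ (w : ℝ → ℝ) (W : Matrix (Fin n) (Fin n) ℝ),
      ContDiffOn ℝ (⊤ : ℕ∞) w U → Wᵀ = -W →
      (∀ u ∈ U, deriv (deriv (deriv w)) u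
        + 4 * trPart n p u * deriv w u + 2 * deriv (trPart n p) u * w u = 0) →
      (∀ u ∈ U, w u • deriv (tfPart n p) u + (2 * deriv w u) • tfPart n p u
        + tfPart n p u * W - W * tfPart n p u = 0) →
      ∀ m ∈ {m : Mfd n | m.1 ∈ U}, ∀ X Y,
        lieD n (fun m : Mfd n =>
            (w m.1,
             (1 / 4) * deriv (deriv w) m.1 * (m.2.2 ⬝ᵥ m.2.2),
             ((1 / 2) * deriv w m.1) • m.2.2 + W *ᵥ m.2.2))
          (Gb n p) m X Y = deriv w m.1 * Gb n p m X Y) := by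
  have htop : ((⊤ : ℕ∞) : WithTop ℕ∞) ≠ 0 := by simp
  have hsucc : ((⊤ : ℕ∞) : WithTop ℕ∞) + 1 ≤ (⊤ : ℕ∞) := by simp
  have hp (u : ℝ) (hu : u ∈ U) : HasDerivAt p (deriv p u) u :=
    hpsmooth.hasDerivAt_deriv htop hUopen hu
  refine ⟨fun m hm => lieD_dilationField (hp m.1 hm), fun m hm => lieD_nullField (hp m.1 hm),
    fun q hq hJacobi m hm => ?_, fun w W hw hW hODE hMat m hm => ?_⟩
  · have hq' := hq.deriv_of_isOpen hUopen hsucc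
    exact lieD_heisenbergField (hp m.1 hm) (hpsymm m.1 hm) (hq.hasDerivAt_deriv htop hUopen hm)
      (hq'.hasDerivAt_deriv htop hUopen hm) (hJacobi m.1 hm)
  · have hw' := hw.deriv_of_isOpen hUopen hsucc
    have hw'' := hw'.deriv_of_isOpen hUopen hsucc
    exact lieD_conformalField (hp m.1 hm) (hw.hasDerivAt_deriv htop hUopen hm)
      (hw'.hasDerivAt_deriv htop hUopen hm) (hw''.hasDerivAt_deriv htop hUopen hm) hW
      (conformalField_condition_of_trPart_tfPart (hp m.1 hm) (hODE m.1 hm) (hMat m.1 hm))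

/-- the dilation `D`, the null translation `H`, the Heisenberg fields `X_q`
(for Jacobi fields `q`), and the fields `V_{(w,W)}` are conformal Killing fields of the
Brinkmann metric, with respective conformal factors `2`, `0`, `0` and `w'(u)`. -/
theorem stmt16 (n : ℕ) (hn : 1 ≤ n)
    (U : Set ℝ) (hUopen : IsOpen U) (hUconv : Convex ℝ U) (hUne : U.Nonempty)
    (p : ℝ → Matrix (Fin n) (Fin n) ℝ)
    (hpsmooth : ContDiffOn ℝ (⊤ : ℕ∞) p U)
    (hpsymm : ∀ u ∈ U, (p u)ᵀ = p u) :
    (∀ m ∈ {m : Mfd n | m.1 ∈ U}, ∀ X Y,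
      lieD n (fun m : Mfd n => (0, 2 * m.2.1, m.2.2)) (Gb n p) m X Y
        = 2 * Gb n p m X Y) ∧
    (∀ m ∈ {m : Mfd n | m.1 ∈ U}, ∀ X Y,
      lieD n (fun _ : Mfd n => ((0 : ℝ), (1 : ℝ), (0 : Fin n → ℝ))) (Gb n p) m X Y
        = 0) ∧
    (∀ q : ℝ → (Fin n → ℝ), ContDiffOn ℝ (⊤ : ℕ∞) q U →
      (∀ u ∈ U, deriv (deriv q) u + p u *ᵥ q u = 0) →
      ∀ m ∈ {m : Mfd n | m.1 ∈ U}, ∀ X Y,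
        lieD n (fun m : Mfd n => ((0 : ℝ), m.2.2 ⬝ᵥ deriv q m.1, q m.1))
          (Gb n p) m X Y = 0) ∧
    (∀ (w : ℝ → ℝ) (W : Matrix (Fin n) (Fin n) ℝ),
      ContDiffOn ℝ (⊤ : ℕ∞) w U → Wᵀ = -W →
      (∀ u ∈ U, deriv (deriv (deriv w)) u
        + 4 * trPart n p u * deriv w u + 2 * deriv (trPart n p) u * w u = 0) →
      (∀ u ∈ U, w u • deriv (tfPart n p) u + (2 * deriv w u) • tfPart n p u
        + tfPart n p u * W - W * tfPart n p u = 0) →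
      ∀ m ∈ {m : Mfd n | m.1 ∈ U}, ∀ X Y,
        lieD n (fun m : Mfd n =>
            (w m.1,
             (1 / 4) * deriv (deriv w) m.1 * (m.2.2 ⬝ᵥ m.2.2),
             ((1 / 2) * deriv w m.1) • m.2.2 + W *ᵥ m.2.2))
          (Gb n p) m X Y = deriv w m.1 * Gb n p m X Y) :=
  stmt16_general n U hUopen p hpsmooth hpsymm
end
end
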